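/- arXiv:1902.05591 — 3 statements merged into one kernel-verified Lean document; each statement's English description precedes it below -/
import Mathlib

section
/- Let p ∈ (4,6], λ₃ > 0, c > 0, and suppose u ∈ S(c) is a minimizer of E on S(c). Then the Pohozaev identity Q(u) = A(u) + (3/2)B(u) + ((3p−6)/p)C(u) = 0 holds. -/
open MeasureTheory Real Filter Set
open scoped RealInnerProductSpace Topology

noncomputable section

/-- Three-dimensional Euclidean space. -/
abbrev R3 : Type := EuclideanSpace ℝ (Fin 3)

/-- Fourier transform with the convention `F f (ξ) = ∫ f(x) e^{-i x·ξ} dx`. -/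
def ft (f : R3 → ℂ) (ξ : R3) : ℂ :=
  ∫ x : R3, Complex.exp (-Complex.I * Complex.ofReal ⟪x, ξ⟫) * f x

/-- The Fourier transform `K̂(ξ) = (4π/3)(2ξ₃² − ξ₁² − ξ₂²)/|ξ|²` of the dipolar kernel. -/
def Khat (ξ : R3) : ℝ :=
  (4 * π / 3) * ((2 * (ξ 2) ^ 2 - (ξ 0) ^ 2 - (ξ 1) ^ 2) / ‖ξ‖ ^ 2)

/-- The dipolar interaction kernel `K(x) = (x₁² + x₂² − 2x₃²)/|x|⁵`. -/
def Kker (x : R3) : ℝ :=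
  ((x 0) ^ 2 + (x 1) ^ 2 - 2 * (x 2) ^ 2) / ‖x‖ ^ 5

/-- The convolution `(K ∗ |u|²)(x)`. -/
def dipConv (u : R3 → ℂ) (x : R3) : ℝ :=
  ∫ y : R3, Kker y * ‖u (x - y)‖ ^ 2

/-- `A(u) = ‖∇u‖_{L²}²`. -/
def funA (u : R3 → ℂ) : ℝ := ∫ x : R3, ‖fderiv ℝ u x‖ ^ 2

/-- `B(u) = (2π)⁻³ ∫ (λ₁ + λ₂ K̂(ξ)) |F(|u|²)(ξ)|² dξ`. -/
def funB (l1 l2 : ℝ) (u : R3 → ℂ) : ℝ :=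
  ((2 * π) ^ 3)⁻¹ *
    ∫ ξ : R3, (l1 + l2 * Khat ξ) * ‖ft (fun x => Complex.ofReal (‖u x‖ ^ 2)) ξ‖ ^ 2

/-- `C(u) = λ₃ ‖u‖_{L^p}^p`. -/
def funC (p l3 : ℝ) (u : R3 → ℂ) : ℝ := l3 * ∫ x : R3, ‖u x‖ ^ p

/-- The energy functional `E(u) = (1/2)A(u) + (1/2)B(u) + (2/p)C(u)`. -/
def energy (p l1 l2 l3 : ℝ) (u : R3 → ℂ) : ℝ :=
  (1 / 2) * funA u + (1 / 2) * funB l1 l2 u + (2 / p) * funC p l3 u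

/-- Membership in `H¹(ℝ³;ℂ)` (formalized with strong derivatives). -/
def InH1 (u : R3 → ℂ) : Prop :=
  MemLp u 2 volume ∧ Differentiable ℝ u ∧ MemLp (fun x => fderiv ℝ u x) 2 volume

/-- Membership in `W^{1,4}(ℝ³;ℂ)` (formalized with strong derivatives). -/
def InW14 (u : R3 → ℂ) : Prop :=
  MemLp u 4 volume ∧ Differentiable ℝ u ∧ MemLp (fun x => fderiv ℝ u x) 4 volume

/-- Membership in the sphere `S(c) = {u ∈ H¹ : ‖u‖_{L²}² = c}`. -/
def InS (c : ℝ) (u : R3 → ℂ) : Prop := InH1 u ∧ (∫ x : R3, ‖u x‖ ^ 2) = c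

/-- The infimum `γ(c) = inf_{S(c)} E`, with `γ(0) = 0`. -/
def gammaInf (p l1 l2 l3 c : ℝ) : ℝ :=
  if c = 0 then 0 else sInf (energy p l1 l2 l3 '' {u | InS c u})

/-- `u` is a minimizer of `E` on `S(c)`. -/
def IsMinimizer (p l1 l2 l3 c : ℝ) (u : R3 → ℂ) : Prop :=
  InS c u ∧ ∀ v : R3 → ℂ, InS c v → energy p l1 l2 l3 u ≤ energy p l1 l2 l3 v

/-- `Ξ = (2π)⁻³ max{|λ₁ − (4π/3)λ₂|, |λ₁ + (8π/3)λ₂|}`. -/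
def Xi (l1 l2 : ℝ) : ℝ :=
  ((2 * π) ^ 3)⁻¹ * max |l1 - (4 * π / 3) * l2| |l1 + (8 * π / 3) * l2|

/-- The Laplacian of `u : ℝ³ → ℂ`. -/
def lap (u : R3 → ℂ) (x : R3) : ℂ :=
  ∑ i : Fin 3, iteratedFDeriv ℝ 2 u x ![EuclideanSpace.single i 1, EuclideanSpace.single i 1]

/-- `(u, β)` solves the standing wave equation (SWedGPE):
`−(1/2)Δu + λ₁|u|²u + λ₂(K∗|u|²)u + λ₃|u|^{p−2}u + βu = 0`. -/
def SolvesSW (p l1 l2 l3 β : ℝ) (u : R3 → ℂ) : Prop :=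
  ∀ᵐ x ∂(volume : Measure R3),
    -(1 / 2 : ℂ) * lap u x + Complex.ofReal (l1 * ‖u x‖ ^ 2) * u x
      + Complex.ofReal (l2 * dipConv u x) * u x
      + Complex.ofReal (l3 * ‖u x‖ ^ (p - 2)) * u x + Complex.ofReal β * u x = 0

/-- The `L^q` norm. -/
def lpN {E : Type*} [NormedAddCommGroup E] (q : ℝ) (f : R3 → E) : ℝ :=
  (∫ x : R3, ‖f x‖ ^ q) ^ (1 / q)

/-- The `H¹` norm. -/
def h1N (u : R3 → ℂ) : ℝ :=
  ((∫ x : R3, ‖u x‖ ^ 2) + ∫ x : R3, ‖fderiv ℝ u x‖ ^ 2) ^ ((1 : ℝ) / 2)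

/-- `ψ` is a strong solution of (edGPE)
`i ∂ₜψ = −(1/2)Δψ + λ₁|ψ|²ψ + λ₂(K∗|ψ|²)ψ + λ₃|ψ|^{p−2}ψ`
on the interval `I ∋ 0` with initial datum `ψ₀`. -/
def IsStrongSol (p l1 l2 l3 : ℝ) (I : Set ℝ) (ψ : ℝ → R3 → ℂ) (ψ0 : R3 → ℂ) : Prop :=
  0 ∈ I ∧ ψ 0 = ψ0 ∧ (∀ t ∈ I, InH1 (ψ t)) ∧
    (∀ x : R3, ∀ t ∈ I, DifferentiableAt ℝ (fun s => ψ s x) t) ∧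
    ∀ t ∈ I, ∀ᵐ x ∂(volume : Measure R3),
      Complex.I * deriv (fun s => ψ s x) t =
        -(1 / 2 : ℂ) * lap (ψ t) x + Complex.ofReal (l1 * ‖ψ t x‖ ^ 2) * ψ t x
          + Complex.ofReal (l2 * dipConv (ψ t) x) * ψ t x
          + Complex.ofReal (l3 * ‖ψ t x‖ ^ (p - 2)) * ψ t x

/-- The free Schrödinger propagator `e^{itΔ/2}`, realized as a Fourier multiplier. -/
def freeProp (t : ℝ) (f : R3 → ℂ) (x : R3) : ℂ :=
  Complex.ofReal ((2 * π) ^ 3)⁻¹ *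
    ∫ ξ : R3, Complex.exp (Complex.I * (Complex.ofReal ⟪x, ξ⟫
      - Complex.ofReal (t * ‖ξ‖ ^ 2 / 2))) * ft f ξ

/-- The scaling `u^t(x) = t^{3/2} u(tx)`. -/
def sclA (t : ℝ) (u : R3 → ℂ) (x : R3) : ℂ := Complex.ofReal (t ^ ((3 : ℝ) / 2)) * u (t • x)

/-- The scaling `ᵗu(x) = t^{−3/p} u(t⁻¹x)`. -/
def sclB (p t : ℝ) (u : R3 → ℂ) (x : R3) : ℂ :=
  Complex.ofReal (t ^ (-(3 : ℝ) / p)) * u (t⁻¹ • x)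

/-- Condition (a1): `λ₂ ≥ 0` and `λ₁ − (4π/3)λ₂ ≥ 0`. -/
def condA1 (l1 l2 : ℝ) : Prop := 0 ≤ l2 ∧ 0 ≤ l1 - (4 * π / 3) * l2

/-- Condition (a2): `λ₂ < 0` and `λ₁ + (8π/3)λ₂ ≥ 0`. -/
def condA2 (l1 l2 : ℝ) : Prop := l2 < 0 ∧ 0 ≤ l1 + (8 * π / 3) * l2

/-- Condition (a3): `λ₂ ≥ 0` and `λ₁ − (4π/3)λ₂ < 0`. -/
def condA3 (l1 l2 : ℝ) : Prop := 0 ≤ l2 ∧ l1 - (4 * π / 3) * l2 < 0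

/-- Condition (a4): `λ₂ < 0` and `λ₁ + (8π/3)λ₂ < 0`. -/
def condA4 (l1 l2 : ℝ) : Prop := l2 < 0 ∧ l1 + (8 * π / 3) * l2 < 0

/-- `u` is radially symmetric up to translation. -/
def RadialSym (u : R3 → ℂ) : Prop :=
  ∃ x0 : R3, ∀ x y : R3, ‖x - x0‖ = ‖y - x0‖ → u x = u y

/-- `u` is axially symmetric with respect to the `x₃`-axis, up to translation. -/
def AxialSym (u : R3 → ℂ) : Prop :=
  ∃ x0 : R3, ∀ x y : R3, (x - x0) 2 = (y - x0) 2 →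
    ((x - x0) 0) ^ 2 + ((x - x0) 1) ^ 2 = ((y - x0) 0) ^ 2 + ((y - x0) 1) ^ 2 → u x = u y

/-- Reflection with respect to the `(x₁,x₂)`-plane. -/
def refl3 (v : R3) : R3 := v - (2 * v 2) • EuclideanSpace.single (2 : Fin 3) (1 : ℝ)

/-- `u` is symmetric with respect to the `(x₁,x₂)`-plane, up to translation. -/
def PlaneSym (u : R3 → ℂ) : Prop :=
  ∃ x0 : R3, ∀ x : R3, u (x0 + refl3 (x - x0)) = u x

/-! ### Auxiliary lemmas for the Pohozaev identity -/

section Aux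

lemma finrank_R3 : Module.finrank ℝ R3 = 3 := finrank_euclideanSpace_fin

lemma int_scale {F : Type*} [NormedAddCommGroup F] [NormedSpace ℝ F]
    {t : ℝ} (ht : 0 < t) (f : R3 → F) :
    ∫ x : R3, f (t • x) = (t ^ 3)⁻¹ • ∫ x : R3, f x := by
  rw [MeasureTheory.Measure.integral_comp_smul volume f t, finrank_R3,
    abs_of_pos (by positivity)]

lemma memLp_comp_smul {F : Type*} [NormedAddCommGroup F] {f : R3 → F} {q : ENNReal}
    (hf : MemLp f q volume) {t : ℝ} (ht : t ≠ 0) :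
    MemLp (fun x => f (t • x)) q volume := by
  have h1 : MemLp f q (Measure.map (t • ·) (volume : Measure R3)) := by
    rw [Measure.map_addHaar_smul volume ht]
    exact hf.smul_measure ENNReal.ofReal_ne_top
  exact
    h1.comp_of_map ((continuous_const_smul t).measurable.aemeasurable)

lemma sclA_hasFDerivAt {u : R3 → ℂ} (hu : Differentiable ℝ u) (t : ℝ) (x : R3) :
    HasFDerivAt (sclA t u)
      ((Complex.ofReal (t ^ ((3 : ℝ) / 2))) • (t • fderiv ℝ u (t • x))) x := by
  have h1 : HasFDerivAt (fun x : R3 => t • x)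
      (t • ContinuousLinearMap.id ℝ R3) x := (hasFDerivAt_id x).const_smul t
  have h2 : HasFDerivAt (fun x : R3 => u (t • x))
      ((fderiv ℝ u (t • x)).comp (t • ContinuousLinearMap.id ℝ R3)) x :=
    (hu (t • x)).hasFDerivAt.comp x h1
  have h3 : (fderiv ℝ u (t • x)).comp (t • ContinuousLinearMap.id ℝ R3)
      = t • fderiv ℝ u (t • x) := by
    ext v
    simp
  rw [h3] at h2
  exact h2.const_mul _

lemma sclA_norm {u : R3 → ℂ} {t : ℝ} (ht : 0 < t) (x : R3) :
    ‖sclA t u x‖ = t ^ ((3 : ℝ) / 2) * ‖u (t • x)‖ := by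
  rw [sclA, norm_mul, Complex.norm_real, Real.norm_eq_abs,
    abs_of_nonneg (Real.rpow_nonneg ht.le _)]

lemma rpow32_sq {t : ℝ} (ht : 0 < t) : (t ^ ((3 : ℝ) / 2)) ^ 2 = t ^ 3 := by
  rw [← Real.rpow_natCast (t ^ ((3 : ℝ) / 2)) 2, ← Real.rpow_natCast t 3,
    ← Real.rpow_mul ht.le]
  norm_num

lemma sclA_norm_sq {u : R3 → ℂ} {t : ℝ} (ht : 0 < t) (x : R3) :
    ‖sclA t u x‖ ^ 2 = t ^ 3 * ‖u (t • x)‖ ^ 2 := by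
  rw [sclA_norm ht, mul_pow, rpow32_sq ht]

lemma mass_sclA {u : R3 → ℂ} {t : ℝ} (ht : 0 < t) :
    ∫ x : R3, ‖sclA t u x‖ ^ 2 = ∫ x : R3, ‖u x‖ ^ 2 := by
  have ht3 : (t : ℝ) ^ 3 ≠ 0 := by positivity
  simp_rw [sclA_norm_sq ht]
  rw [MeasureTheory.integral_const_mul, int_scale ht (fun y => ‖u y‖ ^ 2),
    smul_eq_mul, ← mul_assoc, mul_inv_cancel₀ ht3, one_mul]

lemma funA_sclA {u : R3 → ℂ} (hu : Differentiable ℝ u) {t : ℝ} (ht : 0 < t) :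
    funA (sclA t u) = t ^ (2 : ℝ) * funA u := by
  have ht3 : (t : ℝ) ^ 3 ≠ 0 := by positivity
  have key : ∀ x : R3, ‖fderiv ℝ (sclA t u) x‖ ^ 2
      = t ^ 5 * ‖fderiv ℝ u (t • x)‖ ^ 2 := by
    intro x
    rw [(sclA_hasFDerivAt hu t x).fderiv,
      norm_smul (α := ℂ) (β := R3 →L[ℝ] ℂ) _ _,
      norm_smul (α := ℝ) (β := R3 →L[ℝ] ℂ) _ _,
      Complex.norm_real, Real.norm_eq_abs, Real.norm_eq_abs,
      abs_of_nonneg (Real.rpow_nonneg ht.le _), abs_of_pos ht,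
      mul_pow, mul_pow, rpow32_sq ht]
    ring
  rw [funA, funA]
  simp_rw [key]
  rw [MeasureTheory.integral_const_mul, int_scale ht (fun y => ‖fderiv ℝ u y‖ ^ 2),
    smul_eq_mul, ← mul_assoc]
  congr 1
  rw [Real.rpow_two]
  field_simp

lemma funC_sclA {u : R3 → ℂ} {t p l3 : ℝ} (ht : 0 < t) :
    funC p l3 (sclA t u) = t ^ ((3 : ℝ) / 2 * p - 3) * funC p l3 u := by
  have key : ∀ x : R3, ‖sclA t u x‖ ^ p = t ^ ((3 : ℝ) / 2 * p) * ‖u (t • x)‖ ^ p := by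
    intro x
    rw [sclA_norm ht, Real.mul_rpow (Real.rpow_nonneg ht.le _) (norm_nonneg _),
      ← Real.rpow_mul ht.le]
  rw [funC, funC]
  simp_rw [key]
  rw [MeasureTheory.integral_const_mul, int_scale ht (fun y => ‖u y‖ ^ p), smul_eq_mul]
  have h3 : ((t : ℝ) ^ 3)⁻¹ = t ^ (-(3 : ℝ)) := by
    rw [← Real.rpow_natCast t 3, ← Real.rpow_neg ht.le]
    norm_num
  have hh : t ^ ((3 : ℝ) / 2 * p) * t ^ (-(3 : ℝ)) = t ^ ((3 : ℝ) / 2 * p - 3) := by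
    rw [← Real.rpow_add ht, show (3:ℝ) / 2 * p + -3 = (3:ℝ) / 2 * p - 3 by ring]
  rw [h3, ← hh]
  ring

lemma Khat_smul {t : ℝ} (ht : t ≠ 0) (x : R3) : Khat (t • x) = Khat x := by
  have happ : ∀ i : Fin 3, (t • x) i = t * x i := fun i => rfl
  rw [Khat, Khat, happ, happ, happ, norm_smul, Real.norm_eq_abs]
  have h1 : 2 * (t * x 2) ^ 2 - (t * x 0) ^ 2 - (t * x 1) ^ 2
      = t ^ 2 * (2 * (x 2) ^ 2 - (x 0) ^ 2 - (x 1) ^ 2) := by ring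
  have h2 : (|t| * ‖x‖) ^ 2 = t ^ 2 * ‖x‖ ^ 2 := by rw [mul_pow, sq_abs]
  rw [h1, h2, mul_div_mul_left _ _ (pow_ne_zero 2 ht)]

lemma ft_sclA {u : R3 → ℂ} {t : ℝ} (ht : 0 < t) (ξ : R3) :
    ft (fun x => Complex.ofReal (‖sclA t u x‖ ^ 2)) ξ
      = ft (fun x => Complex.ofReal (‖u x‖ ^ 2)) (t⁻¹ • ξ) := by
  have ht3 : (t : ℝ) ^ 3 ≠ 0 := by positivity
  rw [ft, ft]
  have key : ∀ x : R3,
      Complex.exp (-Complex.I * Complex.ofReal ⟪x, ξ⟫)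
          * Complex.ofReal (‖sclA t u x‖ ^ 2)
        = (fun y : R3 => (Complex.ofReal (t ^ 3)) *
            (Complex.exp (-Complex.I * Complex.ofReal ⟪y, t⁻¹ • ξ⟫)
              * Complex.ofReal (‖u y‖ ^ 2))) (t • x) := by
    intro x
    have hinner : ⟪t • x, t⁻¹ • ξ⟫ = ⟪x, ξ⟫ := by
      rw [real_inner_smul_left, real_inner_smul_right, ← mul_assoc,
        mul_inv_cancel₀ ht.ne', one_mul]
    simp only [hinner, sclA_norm_sq ht]
    push_cast
    ring
  rw [MeasureTheory.integral_congr_ae (Filter.Eventually.of_forall key),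
    int_scale ht (fun y : R3 => (Complex.ofReal (t ^ 3)) *
      (Complex.exp (-Complex.I * Complex.ofReal ⟪y, t⁻¹ • ξ⟫)
        * Complex.ofReal (‖u y‖ ^ 2))),
    MeasureTheory.integral_const_mul]
  rw [Complex.real_smul, ← mul_assoc, ← Complex.ofReal_mul,
    inv_mul_cancel₀ ht3, Complex.ofReal_one, one_mul]

lemma funB_sclA {u : R3 → ℂ} {l1 l2 t : ℝ} (ht : 0 < t) :
    funB l1 l2 (sclA t u) = t ^ (3 : ℝ) * funB l1 l2 u := by
  have ht3 : (t : ℝ) ^ 3 ≠ 0 := by positivity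
  rw [funB, funB]
  have key : ∀ ξ : R3,
      (fun ξ : R3 => (l1 + l2 * Khat ξ) *
        ‖ft (fun x => Complex.ofReal (‖u x‖ ^ 2)) (t⁻¹ • ξ)‖ ^ 2) (t • ξ)
      = (l1 + l2 * Khat ξ) * ‖ft (fun x => Complex.ofReal (‖u x‖ ^ 2)) ξ‖ ^ 2 := by
    intro ξ
    simp only
    rw [Khat_smul ht.ne', smul_smul, inv_mul_cancel₀ ht.ne', one_smul]
  have h1 := int_scale ht (fun ξ : R3 => (l1 + l2 * Khat ξ) *
      ‖ft (fun x => Complex.ofReal (‖u x‖ ^ 2)) (t⁻¹ • ξ)‖ ^ 2)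
  have h2 : (∫ ξ : R3, (l1 + l2 * Khat ξ) *
        ‖ft (fun x => Complex.ofReal (‖u x‖ ^ 2)) ξ‖ ^ 2)
      = (t ^ 3)⁻¹ • ∫ ξ : R3, (l1 + l2 * Khat ξ) *
        ‖ft (fun x => Complex.ofReal (‖u x‖ ^ 2)) (t⁻¹ • ξ)‖ ^ 2 :=
    (MeasureTheory.integral_congr_ae
      (Filter.Eventually.of_forall fun x => (key x).symm)).trans h1
  have h3 : (∫ ξ : R3, (l1 + l2 * Khat ξ) *
        ‖ft (fun x => Complex.ofReal (‖u x‖ ^ 2)) (t⁻¹ • ξ)‖ ^ 2)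
      = t ^ 3 * ∫ ξ : R3, (l1 + l2 * Khat ξ) *
        ‖ft (fun x => Complex.ofReal (‖u x‖ ^ 2)) ξ‖ ^ 2 := by
    rw [h2, smul_eq_mul, ← mul_assoc, mul_inv_cancel₀ ht3, one_mul]
  simp_rw [ft_sclA ht]
  rw [h3, ← Real.rpow_natCast t 3]
  push_cast
  ring

lemma InH1_sclA {u : R3 → ℂ} (h : InH1 u) {t : ℝ} (ht : 0 < t) :
    InH1 (sclA t u) := by
  obtain ⟨h1, h2, h3⟩ := h
  refine ⟨(memLp_comp_smul h1 ht.ne').const_mul _,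
    fun x => (sclA_hasFDerivAt h2 t x).differentiableAt, ?_⟩
  have heq : (fun x => fderiv ℝ (sclA t u) x)
      = fun x => (Complex.ofReal (t ^ ((3 : ℝ) / 2))) • (t • fderiv ℝ u (t • x)) :=
    funext fun x => (sclA_hasFDerivAt h2 t x).fderiv
  rw [heq]
  exact ((memLp_comp_smul h3 ht.ne').const_smul t).const_smul
    (Complex.ofReal (t ^ ((3 : ℝ) / 2)))

end Aux

/-- Pohozaev identity: a minimizer `u` of `E` on `S(c)` satisfies
`Q(u) = A(u) + (3/2)B(u) + ((3p−6)/p)C(u) = 0`. -/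
theorem stmt2 (p l1 l2 l3 c : ℝ) (hp : p ∈ Set.Ioc (4 : ℝ) 6) (hl3 : 0 < l3)
    (hnd : l1 ≠ 0 ∨ l2 ≠ 0) (hc : 0 < c) (u : R3 → ℂ)
    (hmin : IsMinimizer p l1 l2 l3 c u) :
    funA u + (3 / 2) * funB l1 l2 u + ((3 * p - 6) / p) * funC p l3 u = 0 := by
  obtain ⟨⟨⟨hu1, hud, hu2⟩, hmass⟩, hle⟩ := hmin
  have hp0 : p ≠ 0 := by have := hp.1; positivity
  set A := funA u with hA
  set B := funB l1 l2 u with hB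
  set C := funC p l3 u with hC
  set φ : ℝ → ℝ := fun t => 1 / 2 * A * t ^ (2 : ℝ) + 1 / 2 * B * t ^ (3 : ℝ)
      + 2 / p * C * t ^ ((3 : ℝ) / 2 * p - 3) with hφ
  have hscale : ∀ t : ℝ, 0 < t → energy p l1 l2 l3 (sclA t u) = φ t := by
    intro t ht
    rw [energy, funA_sclA hud ht, funB_sclA ht, funC_sclA ht, hφ]
    ring
  have hφ1 : φ 1 = energy p l1 l2 l3 u := by
    rw [hφ, energy]
    simp only [Real.one_rpow, ← hA, ← hB, ← hC]
    ring
  have hmem : ∀ t : ℝ, 0 < t → InS c (sclA t u) := by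
    intro t ht
    exact ⟨InH1_sclA ⟨hu1, hud, hu2⟩ ht, by rw [mass_sclA ht]; exact hmass⟩
  have hlocal : IsLocalMin φ 1 := by
    filter_upwards [Ioi_mem_nhds (show (0 : ℝ) < 1 by norm_num)] with t ht
    rw [hφ1, ← hscale t ht]
    exact hle _ (hmem t ht)
  have hpow : ∀ a : ℝ, HasDerivAt (fun t : ℝ => t ^ a) a 1 := by
    intro a
    have := Real.hasDerivAt_rpow_const (x := (1 : ℝ)) (p := a) (Or.inl one_ne_zero)
    simpa using this
  have hd : HasDerivAt φ
      (1 / 2 * A * 2 + 1 / 2 * B * 3 + 2 / p * C * ((3 : ℝ) / 2 * p - 3)) 1 := by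
    rw [hφ]
    exact (((hpow 2).const_mul (1 / 2 * A)).add
      ((hpow 3).const_mul (1 / 2 * B))).add
      ((hpow ((3 : ℝ) / 2 * p - 3)).const_mul (2 / p * C))
  have hzero := hlocal.hasDerivAt_eq_zero hd
  have hkey : (3 * p - 6) / p * C = 2 / p * C * ((3 : ℝ) / 2 * p - 3) := by
    field_simp
    ring
  rw [hkey]
  linarith [hzero]
end
end

section
/- Let p ∈ (4,6], λ₃ > 0 and suppose (λ₁, λ₂) satisfies condition (a1) or condition (a2). Then for every c > 0, E(u) > 0 for all u ∈ S(c) and γ(c) = 0; in particular E possesses no minimizer on S(c) for any c ∈ (0,∞). -/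
open MeasureTheory Real Filter Set
open scoped RealInnerProductSpace Topology

noncomputable section

namespace Aux

lemma norm_sq_expand (ξ : R3) : ‖ξ‖ ^ 2 = (ξ 0) ^ 2 + (ξ 1) ^ 2 + (ξ 2) ^ 2 := by
  rw [EuclideanSpace.norm_eq, sq_sqrt (Finset.sum_nonneg fun i _ => sq_nonneg _),
    Fin.sum_univ_three]
  simp [Real.norm_eq_abs, sq_abs]

lemma weight_nonneg {l1 l2 : ℝ} (h : condA1 l1 l2 ∨ condA2 l1 l2) (ξ : R3) :
    0 ≤ l1 + l2 * Khat ξ := by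
  have hπ : (0:ℝ) < 4 * π / 3 := by positivity
  set q : ℝ := (2 * (ξ 2) ^ 2 - (ξ 0) ^ 2 - (ξ 1) ^ 2) / ‖ξ‖ ^ 2 with hq
  have hKhat : Khat ξ = (4 * π / 3) * q := rfl
  have hs : (0:ℝ) ≤ ‖ξ‖ ^ 2 := sq_nonneg _
  have hql : -1 ≤ q ∧ q ≤ 2 := by
    rcases eq_or_lt_of_le hs with hs0 | hs0
    · have : q = 0 := by
        rw [hq, ← hs0, div_zero]
      constructor <;> rw [this] <;> norm_num
    · have hnorm := norm_sq_expand ξ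
      constructor
      · rw [hq, le_div_iff₀ hs0]
        nlinarith [sq_nonneg (ξ 0), sq_nonneg (ξ 1), sq_nonneg (ξ 2)]
      · rw [hq, div_le_iff₀ hs0]
        nlinarith [sq_nonneg (ξ 0), sq_nonneg (ξ 1), sq_nonneg (ξ 2)]
    
  rcases h with ⟨h2, h1⟩ | ⟨h2, h1⟩
  · have : l2 * Khat ξ ≥ l2 * ((4 * π / 3) * (-1)) := by
      rw [hKhat]
      apply mul_le_mul_of_nonneg_left _ h2
      exact mul_le_mul_of_nonneg_left hql.1 hπ.le
    nlinarith
  · have : l2 * Khat ξ ≥ l2 * ((4 * π / 3) * 2) := by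
      rw [hKhat]
      apply mul_le_mul_of_nonpos_left _ h2.le
      exact mul_le_mul_of_nonneg_left hql.2 hπ.le
    nlinarith

lemma khat_smul {t : ℝ} (ht : t ≠ 0) (ξ : R3) : Khat (t • ξ) = Khat ξ := by
  have hc : ∀ i : Fin 3, (t • ξ) i = t * ξ i := fun i => rfl
  have hn : ‖t • ξ‖ ^ 2 = t ^ 2 * ‖ξ‖ ^ 2 := by
    rw [norm_smul, mul_pow, Real.norm_eq_abs, sq_abs]
  unfold Khat
  rw [hc, hc, hc, hn]
  congr 1
  rw [show 2 * (t * ξ 2) ^ 2 - (t * ξ 0) ^ 2 - (t * ξ 1) ^ 2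
      = t ^ 2 * (2 * (ξ 2) ^ 2 - (ξ 0) ^ 2 - (ξ 1) ^ 2) by ring]
  exact mul_div_mul_left _ _ (pow_ne_zero 2 ht)

end Aux
namespace Aux

lemma funA_pos {u : R3 → ℂ} {c : ℝ} (hc : 0 < c) (hu : InS c u) : 0 < funA u := by
  classical
  obtain ⟨⟨hu2, hdiff, hgrad⟩, hmass⟩ := hu
  have h0 : 0 ≤ funA u := integral_nonneg fun x => sq_nonneg _
  rcases h0.lt_or_eq with hlt | heq
  · exact hlt
  exfalso
  -- integrand of funA is integrable
  have hint : Integrable (fun x : R3 => ‖fderiv ℝ u x‖ ^ 2) volume := by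
    have h := hgrad.integrable_norm_rpow (by norm_num) (by norm_num)
    simpa [ENNReal.toReal_ofNat, Real.rpow_natCast] using h
  have hz : (fun x : R3 => ‖fderiv ℝ u x‖ ^ 2) =ᵐ[volume] 0 := by
    rw [← integral_eq_zero_iff_of_nonneg (fun x => sq_nonneg _) hint]
    exact heq.symm
  have hfz : ∀ᵐ x : R3 ∂volume, fderiv ℝ u x = 0 := by
    filter_upwards [hz] with x hx
    have : ‖fderiv ℝ u x‖ = 0 := by
      have := hx
      simpa [pow_eq_zero_iff] using hx
    simpa using this
  -- set up the product decomposition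
  set ν : Measure (Fin 2 → ℝ) := Measure.pi fun _ => volume with hν
  set E3 := MeasurableEquiv.piFinSuccAbove (fun _ : Fin 3 => ℝ) 0 with hE3
  set φ : (Fin 2 → ℝ) × ℝ → R3 :=
    fun p => (MeasurableEquiv.toLp 2 (Fin 3 → ℝ)) (E3.symm (p.2, p.1)) with hφdef
  have hφm : MeasurePreserving φ (ν.prod volume) volume := by
    have m0 : MeasurePreserving (MeasurableEquiv.toLp 2 (Fin 3 → ℝ))
        (volume : Measure (Fin 3 → ℝ)) (volume : Measure R3) :=
      (EuclideanSpace.volume_preserving_symm_measurableEquiv_toLp (Fin 3)).symm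
    have m1 : MeasurePreserving E3.symm
        ((volume : Measure ℝ).prod ν) (volume : Measure (Fin 3 → ℝ)) := by
      have := (measurePreserving_piFinSuccAbove (fun _ : Fin 3 => (volume : Measure ℝ)) 0).symm
      rw [volume_pi]
      exact this
    have m2 : MeasurePreserving (Prod.swap : (Fin 2 → ℝ) × ℝ → ℝ × (Fin 2 → ℝ))
        (ν.prod volume) ((volume : Measure ℝ).prod ν) := Measure.measurePreserving_swap
    exact (m0.comp (m1.comp m2) : _)
  have hemb : MeasurableEmbedding φ := by
    have : φ = (MeasurableEquiv.toLp 2 (Fin 3 → ℝ)) ∘ E3.symm ∘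
        (MeasurableEquiv.prodComm : (Fin 2 → ℝ) × ℝ ≃ᵐ ℝ × (Fin 2 → ℝ)) := rfl
    rw [this]
    exact ((MeasurableEquiv.toLp 2 (Fin 3 → ℝ)).measurableEmbedding.comp
      (E3.symm.measurableEmbedding.comp
        (MeasurableEquiv.prodComm : (Fin 2 → ℝ) × ℝ ≃ᵐ ℝ × (Fin 2 → ℝ)).measurableEmbedding))
  -- line structure
  set E0 : R3 := EuclideanSpace.single (0 : Fin 3) (1 : ℝ) with hE0
  have hline : ∀ r : Fin 2 → ℝ, ∀ s : ℝ, φ (r, s) = φ (r, 0) + s • E0 := by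
    intro r s
    ext i
    have hcoord : ∀ t : ℝ, φ (r, t) i = (Fin.insertNth (α := fun _ : Fin 3 => ℝ) 0 t r) i := by
      intro t
      simp [hφdef, hE3, MeasurableEquiv.coe_toLp, MeasurableEquiv.piFinSuccAbove_symm_apply,
        Fin.insertNthEquiv]
    rw [show (φ (r, 0) + s • E0) i = φ (r, 0) i + s * E0 i from rfl, hcoord, hcoord]
    have hE0i : E0 i = if i = 0 then 1 else 0 := by
      rw [hE0, EuclideanSpace.single_apply]
    induction i using Fin.cases with
    | zero => simp [hE0i]
    | succ j => simp [Fin.insertNth_zero, hE0i, Fin.succ_ne_zero]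
  -- transfer mass and a.e. statements
  have hIm : ∫ p, ‖u (φ p)‖ ^ 2 ∂(ν.prod volume) = c :=
    (hφm.integral_comp hemb (fun x => ‖u x‖ ^ 2)).trans hmass
  have hInt2 : Integrable (fun x : R3 => ‖u x‖ ^ 2) volume := by
    by_contra hni
    rw [MeasureTheory.integral_undef hni] at hmass
    exact hc.ne' hmass.symm
  have hIntp : Integrable (fun p => ‖u (φ p)‖ ^ 2) (ν.prod volume) :=
    (hφm.integrable_comp_emb hemb).mpr hInt2
  have hfzp : ∀ᵐ p ∂(ν.prod volume), fderiv ℝ u (φ p) = 0 := by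
    rw [← hφm.map_eq] at hfz
    exact (hemb.ae_map_iff).mp hfz
  have hslice := hIntp.prod_right_ae
  have hfzslice := Measure.ae_ae_of_ae_prod hfzp
  have hkey : ∀ᵐ r ∂ν, (∫ s : ℝ, ‖u (φ (r, s))‖ ^ 2) = 0 := by
    filter_upwards [hslice, hfzslice] with r hintr hzr
    have hD : ∀ s : ℝ, HasDerivAt (fun t => u (φ (r, t))) ((fderiv ℝ u (φ (r, s))) E0) s := by
      intro s
      have h1 : HasDerivAt (fun t : ℝ => φ (r, t)) E0 s := by
        have : (fun t : ℝ => φ (r, t)) = fun t : ℝ => φ (r, 0) + t • E0 := by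
          funext t; exact hline r t
        rw [this]
        simpa using ((hasDerivAt_id s).smul_const E0).const_add (φ (r, 0))
      exact ((hdiff (φ (r, s))).hasFDerivAt.comp_hasDerivAt s h1)
    have hzD : (fun s : ℝ => (fderiv ℝ u (φ (r, s))) E0) =ᵐ[volume] 0 := by
      filter_upwards [hzr] with s hs
      simp [hs]
    have hconst : ∀ s : ℝ, u (φ (r, s)) = u (φ (r, 0)) := by
      intro s
      have hii : IntervalIntegrable (fun t : ℝ => (fderiv ℝ u (φ (r, t))) E0) volume 0 s :=
        ((integrable_zero _ _ _).congr hzD.symm).intervalIntegrable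
      have hftc := intervalIntegral.integral_eq_sub_of_hasDerivAt (fun t _ => hD t) hii
      have hzero : (∫ t in (0:ℝ)..s, (fderiv ℝ u (φ (r, t))) E0) = 0 := by
        rw [intervalIntegral.integral_congr_ae (hzD.mono fun t ht _ => ht)]
        simp
      rw [hzero] at hftc
      exact (sub_eq_zero.mp hftc.symm)
    have hcf : (fun s : ℝ => ‖u (φ (r, s))‖ ^ 2) = fun _ => ‖u (φ (r, 0))‖ ^ 2 :=
      funext fun s => by rw [hconst s]
    rw [hcf] at hintr ⊢
    rcases (integrable_const_iff.mp hintr) with h | h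
    · rw [h]; simp
    · exact absurd h.measure_univ_lt_top (by simp [Real.volume_univ])
  have : c = 0 := by
    rw [← hIm, MeasureTheory.integral_prod _ hIntp,
      MeasureTheory.integral_eq_zero_of_ae hkey]
  exact hc.ne' this

end Aux
namespace Aux

lemma rpow32_sq {t : ℝ} (ht : 0 < t) : (t ^ ((3:ℝ)/2)) ^ (2:ℕ) = t ^ (3:ℕ) := by
  rw [← Real.rpow_natCast (t ^ ((3:ℝ)/2)) 2, ← Real.rpow_mul ht.le, ← Real.rpow_natCast t 3]
  norm_num

lemma norm_sclA {t : ℝ} (ht : 0 < t) (u : R3 → ℂ) (x : R3) :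
    ‖sclA t u x‖ = t ^ ((3:ℝ)/2) * ‖u (t • x)‖ := by
  rw [sclA, norm_mul, Complex.norm_real, Real.norm_eq_abs,
    abs_of_pos (Real.rpow_pos_of_pos ht _)]

lemma mass_sclA {t : ℝ} (ht : 0 < t) (u : R3 → ℂ) :
    ∫ x : R3, ‖sclA t u x‖ ^ 2 = ∫ x : R3, ‖u x‖ ^ 2 := by
  have h1 : ∀ x : R3, ‖sclA t u x‖ ^ 2 = (t ^ ((3:ℝ)/2)) ^ (2:ℕ) * ‖u (t • x)‖ ^ 2 := by
    intro x; rw [norm_sclA ht, mul_pow]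
  rw [integral_congr_ae (Filter.Eventually.of_forall h1), integral_const_mul,
    Measure.integral_comp_smul volume (fun y => ‖u y‖ ^ 2) t,
    finrank_euclideanSpace_fin, rpow32_sq ht, smul_eq_mul,
    abs_of_pos (by positivity : (0:ℝ) < ((t ^ (3:ℕ))⁻¹))]
  field_simp

lemma funC_sclA {t p l3 : ℝ} (ht : 0 < t) (hp : 0 < p) (u : R3 → ℂ) :
    funC p l3 (sclA t u) = t ^ (3 * p / 2 - 3) * funC p l3 u := by
  have h1 : ∀ x : R3, ‖sclA t u x‖ ^ p = t ^ ((3:ℝ)/2 * p) * ‖u (t • x)‖ ^ p := by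
    intro x
    rw [norm_sclA ht, Real.mul_rpow (by positivity) (norm_nonneg _), Real.rpow_mul ht.le]
  rw [funC, funC, integral_congr_ae (Filter.Eventually.of_forall h1),
    integral_const_mul,
    Measure.integral_comp_smul volume (fun y => ‖u y‖ ^ p) t,
    finrank_euclideanSpace_fin, smul_eq_mul,
    abs_of_pos (by positivity : (0:ℝ) < ((t ^ (3:ℕ))⁻¹))]
  have h2 : t ^ ((3:ℝ)/2 * p) * (t ^ (3:ℕ))⁻¹ = t ^ (3 * p / 2 - 3) := by
    rw [← Real.rpow_natCast t 3, ← Real.rpow_neg ht.le, ← Real.rpow_add ht]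
    norm_num
    ring_nf
  rw [← h2]
  ring

lemma fderiv_sclA {t : ℝ} (ht : 0 < t) {u : R3 → ℂ} (hdiff : Differentiable ℝ u) (x : R3) :
    fderiv ℝ (sclA t u) x
      = (t ^ ((3:ℝ)/2) * t) • fderiv ℝ u (t • x) := by
  have hsm : HasFDerivAt (fun x : R3 => t • x) (t • ContinuousLinearMap.id ℝ R3) x := by
    exact (t • ContinuousLinearMap.id ℝ R3).hasFDerivAt (x := x)
  have h1 : HasFDerivAt (fun x : R3 => u (t • x))
      ((fderiv ℝ u (t • x)).comp (t • ContinuousLinearMap.id ℝ R3)) x :=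
    ((hdiff (t • x)).hasFDerivAt).comp x hsm
  have hcomp : (fderiv ℝ u (t • x)).comp (t • ContinuousLinearMap.id ℝ R3)
      = t • fderiv ℝ u (t • x) := by
    ext v
    simp [ContinuousLinearMap.map_smul]
  have h2 : HasFDerivAt (sclA t u)
      ((Complex.ofReal (t ^ ((3:ℝ)/2))) • (t • fderiv ℝ u (t • x))) x := by
    rw [← hcomp]
    exact h1.const_mul _
  have h3 : (Complex.ofReal (t ^ ((3:ℝ)/2))) • (t • fderiv ℝ u (t • x))
      = (t ^ ((3:ℝ)/2) * t) • fderiv ℝ u (t • x) := by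
    ext v
    simp [Complex.real_smul]
    push_cast
    ring
  rw [h3] at h2
  exact h2.fderiv

lemma funA_sclA {t : ℝ} (ht : 0 < t) {u : R3 → ℂ} (hdiff : Differentiable ℝ u) :
    funA (sclA t u) = t ^ (2:ℕ) * funA u := by
  have h1 : ∀ x : R3, ‖fderiv ℝ (sclA t u) x‖ ^ 2
      = (t ^ ((3:ℝ)/2)) ^ (2:ℕ) * t ^ (2:ℕ) * ‖fderiv ℝ u (t • x)‖ ^ 2 := by
    intro x
    rw [fderiv_sclA ht hdiff]
    have hn : ‖(t ^ ((3:ℝ)/2) * t) • fderiv ℝ u (t • x)‖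
        = (t ^ ((3:ℝ)/2) * t) * ‖fderiv ℝ u (t • x)‖ := by
      have h := norm_smul (t ^ ((3:ℝ)/2) * t) (fderiv ℝ u (t • x))
      rwa [Real.norm_eq_abs, abs_of_pos (by positivity : (0:ℝ) < t ^ ((3:ℝ)/2) * t)] at h
    rw [hn]
    ring
  rw [funA, funA, integral_congr_ae (Filter.Eventually.of_forall h1),
    integral_const_mul,
    Measure.integral_comp_smul volume (fun y => ‖fderiv ℝ u y‖ ^ 2) t,
    finrank_euclideanSpace_fin, rpow32_sq ht, smul_eq_mul,
    abs_of_pos (by positivity : (0:ℝ) < ((t ^ (3:ℕ))⁻¹))]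
  field_simp

lemma ft_sclA {t : ℝ} (ht : 0 < t) (u : R3 → ℂ) (ξ : R3) :
    ft (fun x => Complex.ofReal (‖sclA t u x‖ ^ 2)) ξ
      = ft (fun x => Complex.ofReal (‖u x‖ ^ 2)) (t⁻¹ • ξ) := by
  have hne : t ≠ 0 := ht.ne'
  set g : R3 → ℂ := fun y =>
    Complex.exp (-Complex.I * Complex.ofReal ⟪t⁻¹ • y, ξ⟫) *
      ((t ^ (3:ℕ) : ℝ) : ℂ) * Complex.ofReal (‖u y‖ ^ 2) with hg
  have h1 : ∀ x : R3, Complex.exp (-Complex.I * Complex.ofReal ⟪x, ξ⟫) *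
      Complex.ofReal (‖sclA t u x‖ ^ 2) = g (t • x) := by
    intro x
    have hx : t⁻¹ • (t • x) = x := by rw [smul_smul, inv_mul_cancel₀ hne, one_smul]
    show _ = Complex.exp (-Complex.I * Complex.ofReal ⟪t⁻¹ • (t • x), ξ⟫) *
      ((t ^ (3:ℕ) : ℝ) : ℂ) * Complex.ofReal (‖u (t • x)‖ ^ 2)
    rw [hx]
    have : (‖sclA t u x‖ ^ 2 : ℝ) = (t ^ (3:ℕ) : ℝ) * ‖u (t • x)‖ ^ 2 := by
      rw [norm_sclA ht, mul_pow, rpow32_sq ht]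
    rw [this]
    push_cast
    ring
  rw [ft, integral_congr_ae (Filter.Eventually.of_forall h1),
    Measure.integral_comp_smul volume g t, finrank_euclideanSpace_fin]
  have h2 : ∀ y : R3, g y = ((t ^ (3:ℕ) : ℝ) : ℂ) *
      (Complex.exp (-Complex.I * Complex.ofReal ⟪y, t⁻¹ • ξ⟫) * Complex.ofReal (‖u y‖ ^ 2)) := by
    intro y
    show Complex.exp (-Complex.I * Complex.ofReal ⟪t⁻¹ • y, ξ⟫) *
      ((t ^ (3:ℕ) : ℝ) : ℂ) * Complex.ofReal (‖u y‖ ^ 2) = _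
    have : ⟪t⁻¹ • y, ξ⟫ = ⟪y, t⁻¹ • ξ⟫ := by
      rw [real_inner_smul_left, real_inner_smul_right]
    rw [this]
    ring
  rw [integral_congr_ae (Filter.Eventually.of_forall h2), integral_const_mul, ft,
    abs_of_pos (by positivity : (0:ℝ) < ((t ^ (3:ℕ))⁻¹)), Complex.real_smul, ← mul_assoc]
  push_cast
  rw [inv_mul_cancel₀ (pow_ne_zero 3 (Complex.ofReal_ne_zero.mpr hne)), one_mul]

lemma funB_sclA {t l1 l2 : ℝ} (ht : 0 < t) (u : R3 → ℂ) :
    funB l1 l2 (sclA t u) = t ^ (3:ℕ) * funB l1 l2 u := by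
  have hne : t ≠ 0 := ht.ne'
  set F : R3 → ℝ := fun η => (l1 + l2 * Khat η) *
    ‖ft (fun x => Complex.ofReal (‖u x‖ ^ 2)) η‖ ^ 2 with hF
  have h1 : ∀ ξ : R3, (l1 + l2 * Khat ξ) *
      ‖ft (fun x => Complex.ofReal (‖sclA t u x‖ ^ 2)) ξ‖ ^ 2 = F (t⁻¹ • ξ) := by
    intro ξ
    rw [ft_sclA ht]
    show _ = (l1 + l2 * Khat (t⁻¹ • ξ)) * _
    rw [khat_smul (inv_ne_zero hne)]
  rw [funB, funB, integral_congr_ae (Filter.Eventually.of_forall h1),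
    Measure.integral_comp_inv_smul volume F t, finrank_euclideanSpace_fin,
    abs_of_pos (by positivity : (0:ℝ) < t ^ (3:ℕ)), smul_eq_mul]
  ring

end Aux
namespace Aux

def G (a b : ℝ) : R3 → ℂ := fun x => Complex.ofReal (a * Real.exp (-b * ‖x‖ ^ 2))

lemma integrable_gauss {b : ℝ} (hb : 0 < b) :
    Integrable (fun x : R3 => Real.exp (-b * ‖x‖ ^ 2)) volume := by
  have h := (GaussianFourier.integrable_cexp_neg_mul_sq_norm_add
    (V := R3) (b := (b : ℂ)) (by simpa using hb) 0 0).norm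
  refine h.congr (Filter.Eventually.of_forall fun x => ?_)
  simp only [zero_mul, add_zero, Complex.norm_exp]
  congr 1
  rw [show -(b:ℂ) * (‖x‖:ℂ) ^ 2 = ((-b * ‖x‖ ^ 2 : ℝ) : ℂ) by push_cast; ring,
    Complex.ofReal_re]

lemma hasFDerivAt_G (a b : ℝ) (x : R3) :
    HasFDerivAt (G a b)
      (Complex.ofRealCLM.comp
        (a • ((Real.exp (-b * ‖x‖ ^ 2)) • ((-b) • ((2:ℝ) • innerSL ℝ x))))) x := by
  have f1 : HasFDerivAt (fun y : R3 => ‖y‖ ^ 2) ((2:ℝ) • innerSL ℝ x) x := by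
    have h := (hasStrictFDerivAt_norm_sq x).hasFDerivAt
    simpa [two_smul] using h
  have f2 : HasFDerivAt (fun y : R3 => -b * ‖y‖ ^ 2) ((-b) • ((2:ℝ) • innerSL ℝ x)) x :=
    f1.const_mul (-b)
  have f3 : HasFDerivAt (fun y : R3 => Real.exp (-b * ‖y‖ ^ 2))
      ((Real.exp (-b * ‖x‖ ^ 2)) • ((-b) • ((2:ℝ) • innerSL ℝ x))) x :=
    (Real.hasDerivAt_exp _).comp_hasFDerivAt x f2
  have f4 : HasFDerivAt (fun y : R3 => a * Real.exp (-b * ‖y‖ ^ 2))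
      (a • ((Real.exp (-b * ‖x‖ ^ 2)) • ((-b) • ((2:ℝ) • innerSL ℝ x)))) x :=
    f3.const_mul a
  exact Complex.ofRealCLM.hasFDerivAt.comp x f4

lemma norm_fderiv_G (a b : ℝ) (x : R3) :
    ‖fderiv ℝ (G a b) x‖ ≤ 2 * |a| * |b| * (‖x‖ * Real.exp (-b * ‖x‖ ^ 2)) := by
  rw [(hasFDerivAt_G a b x).fderiv]
  refine le_trans (ContinuousLinearMap.opNorm_comp_le _ _) ?_
  have h1 : ‖Complex.ofRealCLM‖ ≤ 1 := by
    refine ContinuousLinearMap.opNorm_le_bound _ zero_le_one fun y => ?_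
    simp
  have e1 : ‖(2:ℝ) • innerSL ℝ x‖ = 2 * ‖x‖ := by
    have h := norm_smul (2:ℝ) (innerSL ℝ x)
    rw [Real.norm_eq_abs, innerSL_apply_norm] at h
    rw [h, abs_of_pos (by norm_num : (0:ℝ) < 2)]
  have e2 : ‖(-b) • ((2:ℝ) • innerSL ℝ x)‖ = |b| * (2 * ‖x‖) := by
    have h := norm_smul (-b) ((2:ℝ) • innerSL ℝ x)
    rw [Real.norm_eq_abs, abs_neg, e1] at h
    exact h
  have e3 : ‖(Real.exp (-b * ‖x‖ ^ 2)) • ((-b) • ((2:ℝ) • innerSL ℝ x))‖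
      = Real.exp (-b * ‖x‖ ^ 2) * (|b| * (2 * ‖x‖)) := by
    have h := norm_smul (Real.exp (-b * ‖x‖ ^ 2)) ((-b) • ((2:ℝ) • innerSL ℝ x))
    rw [Real.norm_eq_abs, abs_of_pos (Real.exp_pos _), e2] at h
    exact h
  have e4 : ‖a • ((Real.exp (-b * ‖x‖ ^ 2)) • ((-b) • ((2:ℝ) • innerSL ℝ x)))‖
      = |a| * (Real.exp (-b * ‖x‖ ^ 2) * (|b| * (2 * ‖x‖))) := by
    have h := norm_smul a ((Real.exp (-b * ‖x‖ ^ 2)) • ((-b) • ((2:ℝ) • innerSL ℝ x)))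
    rw [Real.norm_eq_abs, e3] at h
    exact h
  calc ‖Complex.ofRealCLM‖ * ‖a • ((Real.exp (-b * ‖x‖ ^ 2)) • ((-b) • ((2:ℝ) • innerSL ℝ x)))‖
      ≤ 1 * (|a| * (Real.exp (-b * ‖x‖ ^ 2) * (|b| * (2 * ‖x‖)))) := by
        rw [e4]; exact mul_le_mul_of_nonneg_right h1 (by positivity)
    _ = 2 * |a| * |b| * (‖x‖ * Real.exp (-b * ‖x‖ ^ 2)) := by ring

lemma contDiff_G (a b : ℝ) : ContDiff ℝ 1 (G a b) := by
  have h1 : ContDiff ℝ 1 (fun y : R3 => ‖y‖ ^ 2) := contDiff_norm_sq ℝ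
  have h2 : ContDiff ℝ 1 (fun y : R3 => a * Real.exp (-b * ‖y‖ ^ 2)) :=
    (Real.contDiff_exp.comp (h1.const_smul (-b))).const_smul a
  exact Complex.ofRealCLM.contDiff.comp h2

lemma exp_sq (r : ℝ) : Real.exp r ^ 2 = Real.exp (2 * r) := by
  rw [sq, ← Real.exp_add]; ring_nf

lemma inH1_G (a : ℝ) {b : ℝ} (hb : 0 < b) : InH1 (G a b) := by
  have hdiff : Differentiable ℝ (G a b) := fun x => ((hasFDerivAt_G a b x).differentiableAt)
  have hcont : Continuous (G a b) := hdiff.continuous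
  refine ⟨?_, hdiff, ?_⟩
  · rw [memLp_two_iff_integrable_sq_norm hcont.aestronglyMeasurable]
    have h : Integrable (fun x : R3 => a ^ 2 * Real.exp (-(2*b) * ‖x‖ ^ 2)) volume :=
      (integrable_gauss (by positivity)).const_mul _
    refine h.congr (Filter.Eventually.of_forall fun x => ?_)
    simp only [G]
    rw [Complex.norm_real, Real.norm_eq_abs, abs_mul, mul_pow, sq_abs, sq_abs, exp_sq]
    ring_nf
  · have hcf : Continuous (fun x : R3 => fderiv ℝ (G a b) x) :=
      (contDiff_G a b).continuous_fderiv (by norm_num)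
    rw [memLp_two_iff_integrable_sq_norm hcf.aestronglyMeasurable]
    have h : Integrable (fun x : R3 =>
        ((2 * |a| * |b|) ^ 2 * b⁻¹) * Real.exp (-b * ‖x‖ ^ 2)) volume :=
      (integrable_gauss hb).const_mul _
    refine h.mono' (hcf.norm.pow 2).aestronglyMeasurable
      (Filter.Eventually.of_forall fun x => ?_)
    rw [Real.norm_eq_abs, abs_of_nonneg (sq_nonneg _)]
    have h1 := norm_fderiv_G a b x
    have h2 : ‖fderiv ℝ (G a b) x‖ ^ 2
        ≤ (2 * |a| * |b|) ^ 2 * ((‖x‖ ^ 2 * Real.exp (-b * ‖x‖ ^ 2)) * Real.exp (-b * ‖x‖ ^ 2)) := by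
      calc ‖fderiv ℝ (G a b) x‖ ^ 2
          ≤ (2 * |a| * |b| * (‖x‖ * Real.exp (-b * ‖x‖ ^ 2))) ^ 2 := by
            apply sq_le_sq' _ h1
            nlinarith [norm_nonneg (fderiv ℝ (G a b) x)]
        _ = (2 * |a| * |b|) ^ 2 * ((‖x‖ ^ 2 * Real.exp (-b * ‖x‖ ^ 2)) * Real.exp (-b * ‖x‖ ^ 2)) := by
            ring
    refine h2.trans ?_
    have hkey : ‖x‖ ^ 2 * Real.exp (-b * ‖x‖ ^ 2) ≤ b⁻¹ := by
      have h3 : b * ‖x‖ ^ 2 ≤ Real.exp (b * ‖x‖ ^ 2) := by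
        linarith [Real.add_one_le_exp (b * ‖x‖ ^ 2)]
      have h5 : Real.exp (b * ‖x‖ ^ 2) * Real.exp (-b * ‖x‖ ^ 2) = 1 := by
        rw [← Real.exp_add]; simp
      have h4 : ‖x‖ ^ 2 * Real.exp (-b * ‖x‖ ^ 2) * b ≤ 1 := by
        calc ‖x‖ ^ 2 * Real.exp (-b * ‖x‖ ^ 2) * b
            = (b * ‖x‖ ^ 2) * Real.exp (-b * ‖x‖ ^ 2) := by ring
          _ ≤ Real.exp (b * ‖x‖ ^ 2) * Real.exp (-b * ‖x‖ ^ 2) :=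
              mul_le_mul_of_nonneg_right h3 (Real.exp_pos _).le
          _ = 1 := h5
      rw [inv_eq_one_div, le_div_iff₀ hb]
      exact h4
    calc (2 * |a| * |b|) ^ 2 * ((‖x‖ ^ 2 * Real.exp (-b * ‖x‖ ^ 2)) * Real.exp (-b * ‖x‖ ^ 2))
        ≤ (2 * |a| * |b|) ^ 2 * (b⁻¹ * Real.exp (-b * ‖x‖ ^ 2)) := by
          apply mul_le_mul_of_nonneg_left _ (by positivity)
          exact mul_le_mul_of_nonneg_right hkey (Real.exp_pos _).le
      _ = (2 * |a| * |b|) ^ 2 * b⁻¹ * Real.exp (-b * ‖x‖ ^ 2) := by ring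

lemma mass_G (a : ℝ) :
    (∫ x : R3, ‖G a 1 x‖ ^ 2) = a ^ 2 * ∫ x : R3, Real.exp (-2 * ‖x‖ ^ 2) := by
  rw [← integral_const_mul]
  refine integral_congr_ae (Filter.Eventually.of_forall fun x => ?_)
  simp only [G]
  rw [Complex.norm_real, Real.norm_eq_abs, abs_mul, mul_pow, sq_abs, sq_abs, exp_sq]
  norm_num

lemma gauss_int_pos : 0 < ∫ x : R3, Real.exp (-2 * ‖x‖ ^ 2) := by
  rw [GaussianFourier.integral_rexp_neg_mul_sq_norm (by norm_num : (0:ℝ) < 2)]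
  positivity

lemma sclA_G {t : ℝ} (ht : 0 < t) (a : ℝ) :
    sclA t (G a 1) = G (t ^ ((3:ℝ)/2) * a) (t ^ 2) := by
  funext x
  rw [sclA, G, G]
  have hns : ‖t • x‖ ^ 2 = t ^ 2 * ‖x‖ ^ 2 := by
    rw [norm_smul, Real.norm_eq_abs, mul_pow, sq_abs]
  rw [hns]
  push_cast
  ring_nf

end Aux
namespace Aux

lemma funB_nonneg {l1 l2 : ℝ} (h : condA1 l1 l2 ∨ condA2 l1 l2) (u : R3 → ℂ) :
    0 ≤ funB l1 l2 u := by
  have hπ : (0:ℝ) < π := Real.pi_pos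
  apply mul_nonneg (by positivity)
  exact integral_nonneg fun ξ => mul_nonneg (weight_nonneg h ξ) (sq_nonneg _)

lemma funC_nonneg {p l3 : ℝ} (hl3 : 0 < l3) (u : R3 → ℂ) : 0 ≤ funC p l3 u :=
  mul_nonneg hl3.le (integral_nonneg fun x => Real.rpow_nonneg (norm_nonneg _) _)

lemma energy_pos {p l1 l2 l3 c : ℝ} (hp : 4 < p) (hl3 : 0 < l3)
    (h : condA1 l1 l2 ∨ condA2 l1 l2) (hc : 0 < c) {u : R3 → ℂ} (hu : InS c u) :
    0 < energy p l1 l2 l3 u := by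
  have hA := funA_pos hc hu
  have hB := funB_nonneg h u
  have hC := funC_nonneg (p := p) hl3 u
  have hp0 : (0:ℝ) < 2 / p := by positivity
  unfold energy
  nlinarith

end Aux

/-- In the regimes (a1), (a2): `E > 0` on `S(c)`, `γ(c) = 0`, and `E` has no
minimizer on `S(c)`, for every `c > 0`. -/
theorem stmt12 (p l1 l2 l3 : ℝ) (hp : p ∈ Set.Ioc (4 : ℝ) 6) (hl3 : 0 < l3)
    (h : condA1 l1 l2 ∨ condA2 l1 l2) :
    ∀ c : ℝ, 0 < c →
      (∀ u : R3 → ℂ, InS c u → 0 < energy p l1 l2 l3 u) ∧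
        gammaInf p l1 l2 l3 c = 0 ∧ ¬∃ u : R3 → ℂ, IsMinimizer p l1 l2 l3 c u := by
  obtain ⟨hp4, hp6⟩ := hp
  intro c hc
  have hp0 : (0:ℝ) < p := by linarith
  have hI : 0 < ∫ x : R3, Real.exp (-2 * ‖x‖ ^ 2) := Aux.gauss_int_pos
  set I : ℝ := ∫ x : R3, Real.exp (-2 * ‖x‖ ^ 2) with hIdef
  set a : ℝ := Real.sqrt (c / I) with hadef
  set u₀ : R3 → ℂ := Aux.G a 1 with hu₀def
  have hH1 : InH1 u₀ := Aux.inH1_G a one_pos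
  have hdiff₀ : Differentiable ℝ u₀ := hH1.2.1
  have hmass₀ : (∫ x : R3, ‖u₀ x‖ ^ 2) = c := by
    rw [hu₀def, Aux.mass_G a, ← hIdef, hadef, Real.sq_sqrt (by positivity),
      div_mul_cancel₀ _ hI.ne']
  have hu₀S : InS c u₀ := ⟨hH1, hmass₀⟩
  have hfam : ∀ t : ℝ, 0 < t → InS c (sclA t u₀) := by
    intro t ht
    constructor
    · rw [hu₀def, Aux.sclA_G ht]
      exact Aux.inH1_G _ (by positivity)
    · rw [Aux.mass_sclA ht]
      exact hmass₀
  set F : ℝ → ℝ := fun t => (1/2) * (t ^ (2:ℕ) * funA u₀)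
      + (1/2) * (t ^ (3:ℕ) * funB l1 l2 u₀)
      + (2/p) * (t ^ (3 * p / 2 - 3) * funC p l3 u₀) with hFdef
  have hEt : ∀ t : ℝ, 0 < t → energy p l1 l2 l3 (sclA t u₀) = F t := by
    intro t ht
    rw [energy, Aux.funA_sclA ht hdiff₀, Aux.funB_sclA ht, Aux.funC_sclA ht hp0, hFdef]
  have he : (0:ℝ) < 3 * p / 2 - 3 := by linarith
  have hT : Filter.Tendsto F (𝓝[>] (0:ℝ)) (𝓝 0) := by
    have t2 : Filter.Tendsto (fun t : ℝ => t ^ (2:ℕ)) (𝓝[>] (0:ℝ)) (𝓝 0) := by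
      have h2 := (continuous_pow 2).tendsto (0:ℝ)
      rw [show (0:ℝ) ^ (2:ℕ) = 0 by norm_num] at h2
      exact h2.mono_left nhdsWithin_le_nhds
    have t3 : Filter.Tendsto (fun t : ℝ => t ^ (3:ℕ)) (𝓝[>] (0:ℝ)) (𝓝 0) := by
      have h3 := (continuous_pow 3).tendsto (0:ℝ)
      rw [show (0:ℝ) ^ (3:ℕ) = 0 by norm_num] at h3
      exact h3.mono_left nhdsWithin_le_nhds
    have te : Filter.Tendsto (fun t : ℝ => t ^ (3 * p / 2 - 3)) (𝓝[>] (0:ℝ)) (𝓝 0) := by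
      have hct := (Real.continuousAt_rpow_const 0 (3 * p / 2 - 3) (Or.inr he.le)).tendsto
      rw [Real.zero_rpow he.ne'] at hct
      exact hct.mono_left nhdsWithin_le_nhds
    have := (((t2.mul_const (funA u₀)).const_mul (1/2 : ℝ)).add
        ((t3.mul_const (funB l1 l2 u₀)).const_mul (1/2 : ℝ))).add
        ((te.mul_const (funC p l3 u₀)).const_mul (2/p : ℝ))
    simpa [hFdef] using this
  have hpos : ∀ u : R3 → ℂ, InS c u → 0 < energy p l1 l2 l3 u :=
    fun u hu => Aux.energy_pos hp4 hl3 h hc hu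
  refine ⟨hpos, ?_, ?_⟩
  · unfold gammaInf
    rw [if_neg hc.ne']
    have hbdd : BddBelow (energy p l1 l2 l3 '' {u | InS c u}) := by
      refine ⟨0, ?_⟩
      rintro y ⟨v, hv, rfl⟩
      exact (hpos v hv).le
    apply le_antisymm
    · by_contra hlt
      push_neg at hlt
      have hev := hT.eventually_lt_const hlt
      obtain ⟨t, htF, ht0⟩ := (hev.and self_mem_nhdsWithin).exists
      have hmem : energy p l1 l2 l3 (sclA t u₀) ∈ energy p l1 l2 l3 '' {u | InS c u} :=
        ⟨_, hfam t ht0, rfl⟩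
      have hle := csInf_le hbdd hmem
      rw [hEt t ht0] at hle
      exact absurd (hle.trans_lt htF) (lt_irrefl _)
    · refine le_csInf ⟨_, ⟨u₀, hu₀S, rfl⟩⟩ ?_
      rintro y ⟨v, hv, rfl⟩
      exact (hpos v hv).le
  · rintro ⟨u, huS, hmin⟩
    have hEu := hpos u huS
    have hev := hT.eventually_lt_const hEu
    obtain ⟨t, htF, ht0⟩ := (hev.and self_mem_nhdsWithin).exists
    have hle := hmin _ (hfam t ht0)
    rw [hEt t ht0] at hle
    exact absurd (hle.trans_lt htF) (lt_irrefl _)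
end
end

section
/- Suppose (λ₁, λ₂) satisfies condition (a3) or condition (a4). Then for each c > 0 there exists u ∈ S(c) such that B(u) < 0. -/
open MeasureTheory Real Filter Set
open scoped RealInnerProductSpace Topology

noncomputable section

section AuxStmt13

open scoped FourierTransform

/-- Diagonal scaling linear map on `R3`. -/
def dscl (d : Fin 3 → ℝ) : R3 →ₗ[ℝ] R3 :=
  ((WithLp.linearEquiv 2 ℝ (Fin 3 → ℝ)).symm.toLinearMap) ∘ₗ
    (Matrix.toLin' (Matrix.diagonal d)) ∘ₗ (WithLp.linearEquiv 2 ℝ (Fin 3 → ℝ)).toLinearMap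

lemma dscl_apply (d : Fin 3 → ℝ) (x : R3) (i : Fin 3) : dscl d x i = d i * x i := by
  simp [dscl, Matrix.toLin'_apply, Matrix.mulVec_diagonal]

lemma dscl_det (d : Fin 3 → ℝ) : LinearMap.det (dscl d) = d 0 * d 1 * d 2 := by
  have : dscl d = ((WithLp.linearEquiv 2 ℝ (Fin 3 → ℝ)).symm : (Fin 3 → ℝ) →ₗ[ℝ] R3) ∘ₗ
      (Matrix.toLin' (Matrix.diagonal d)) ∘ₗ
      (((WithLp.linearEquiv 2 ℝ (Fin 3 → ℝ)).symm.symm : R3 →ₗ[ℝ] (Fin 3 → ℝ))) := rfl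
  rw [this, LinearMap.det_conj, LinearMap.det_toLin', Matrix.det_diagonal,
    Fin.prod_univ_three]

lemma normsq3 (x : R3) : ‖x‖ ^ 2 = x 0 ^ 2 + x 1 ^ 2 + x 2 ^ 2 := by
  rw [← real_inner_self_eq_norm_sq, PiLp.inner_apply, Fin.sum_univ_three]
  simp [RCLike.inner_apply, sq]

lemma inner_dscl (d : Fin 3 → ℝ) (x y : R3) : ⟪dscl d x, y⟫ = ⟪x, dscl d y⟫ := by
  rw [PiLp.inner_apply, PiLp.inner_apply, Fin.sum_univ_three, Fin.sum_univ_three]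
  simp [RCLike.inner_apply, dscl_apply]
  ring

lemma dscl_dscl (d e : Fin 3 → ℝ) (x : R3) (h : ∀ i, d i * e i = 1) :
    dscl d (dscl e x) = x := by
  ext i
  rw [dscl_apply, dscl_apply, ← mul_assoc, h i, one_mul]

lemma dscl_map_volume (d : Fin 3 → ℝ) (hd : d 0 * d 1 * d 2 ≠ 0) :
    Measure.map (dscl d) (volume : Measure R3)
      = ENNReal.ofReal |(d 0 * d 1 * d 2)⁻¹| • volume := by
  rw [Measure.map_linearMap_addHaar_eq_smul_addHaar _ (by rw [dscl_det]; exact hd), dscl_det]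

lemma integral_dscl {E : Type*} [NormedAddCommGroup E] [NormedSpace ℝ E]
    (d : Fin 3 → ℝ) (hd : d 0 * d 1 * d 2 ≠ 0) (h : R3 → E)
    (hm : AEStronglyMeasurable h (volume : Measure R3)) :
    ∫ x : R3, h (dscl d x) = |d 0 * d 1 * d 2|⁻¹ • ∫ x : R3, h x := by
  have hmap := dscl_map_volume d hd
  have hcont : Continuous (dscl d) := (dscl d).continuous_of_finiteDimensional
  have hm' : AEStronglyMeasurable h (Measure.map (dscl d) volume) := by
    rw [hmap]
    exact hm.smul_measure _
  rw [← integral_map hcont.measurable.aemeasurable hm', hmap, integral_smul_measure,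
    ENNReal.toReal_ofReal (abs_nonneg _), abs_inv]

lemma integrable_dscl {E : Type*} [NormedAddCommGroup E]
    (d : Fin 3 → ℝ) (hd : d 0 * d 1 * d 2 ≠ 0) (h : R3 → E)
    (hi : Integrable h (volume : Measure R3)) :
    Integrable (fun x : R3 => h (dscl d x)) volume := by
  have hmap := dscl_map_volume d hd
  have hcont : Continuous (dscl d) := (dscl d).continuous_of_finiteDimensional
  have : Integrable h (Measure.map (dscl d) volume) := by
    rw [hmap]; exact hi.smul_measure ENNReal.ofReal_ne_top
  exact (integrable_map_measure (by rw [hmap]; exact hi.1.smul_measure _)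
    hcont.measurable.aemeasurable).mp this

lemma integrable_gauss3 {b : ℝ} (hb : 0 < b) :
    Integrable (fun x : R3 => rexp (-b * ‖x‖ ^ 2)) volume := by
  have h := GaussianFourier.integrable_cexp_neg_mul_sq_norm_add (V := R3)
    (b := (b : ℂ)) (by simpa using hb) 0 0
  have := h.norm
  have heq : (fun x : R3 => rexp (-b * ‖x‖ ^ 2)) = fun a : R3 => rexp (-(b * ((‖a‖:ℂ) ^ 2).re)) := by
    ext a
    rw [← Complex.ofReal_pow, Complex.ofReal_re]
    ring_nf
  rw [heq]
  simpa [Complex.norm_exp] using this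

lemma ft_eq_fourierIntegral (f : R3 → ℂ) (ξ : R3) :
    ft f ξ = 𝓕 f ((2 * π)⁻¹ • ξ) := by
  rw [Real.fourier_eq', ft]
  congr 1
  ext x
  rw [real_inner_smul_right, smul_eq_mul]
  congr 1
  have hπ : (π : ℝ) ≠ 0 := pi_ne_zero
  have : -2 * π * ((2 * π)⁻¹ * ⟪x, ξ⟫) = -⟪x, ξ⟫ := by field_simp
  rw [this]
  push_cast
  ring

lemma ft_gaussian (η : R3) :
    ft (fun x : R3 => (rexp (-‖x‖ ^ 2) : ℂ)) η
      = ((π ^ ((3 : ℝ) / 2) * rexp (-‖η‖ ^ 2 / 4) : ℝ) : ℂ) := by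
  rw [ft_eq_fourierIntegral]
  have h1 : (fun x : R3 => (rexp (-‖x‖ ^ 2) : ℂ))
      = fun x : R3 => Complex.exp (-(1:ℂ) * ‖x‖ ^ 2) := by
    ext x
    rw [show (-1 * ((‖x‖:ℝ):ℂ) ^ 2) = ((-‖x‖ ^ 2 : ℝ) : ℂ) by push_cast; ring,
      ← Complex.ofReal_exp]
  rw [h1, fourier_gaussian_innerProductSpace (by norm_num)]
  rw [finrank_euclideanSpace_fin]
  have hw : ‖(2 * π)⁻¹ • η‖ ^ 2 = (2 * π)⁻¹ ^ 2 * ‖η‖ ^ 2 := by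
    rw [norm_smul, Real.norm_eq_abs, abs_of_pos (by positivity : (0:ℝ) < (2 * π)⁻¹)]
    ring
  have hexp : -(π:ℂ) ^ 2 * (‖(2 * π)⁻¹ • η‖:ℂ) ^ 2 / 1 = ((-‖η‖ ^ 2 / 4 : ℝ) : ℂ) := by
    rw [div_one,
      show ((‖(2 * π)⁻¹ • η‖ : ℝ) : ℂ) ^ 2 = ((((2 * π)⁻¹ ^ 2 * ‖η‖ ^ 2 : ℝ)) : ℂ) by
        rw [← Complex.ofReal_pow, hw]]
    have hπ : (π : ℂ) ≠ 0 := by exact_mod_cast pi_ne_zero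
    push_cast
    field_simp
    ring
  rw [hexp]
  have h2 : ((π : ℂ) / 1) ^ ((3:ℕ) / 2 : ℂ) = ((π ^ ((3:ℝ)/2) : ℝ) : ℂ) := by
    rw [div_one, Complex.ofReal_cpow pi_pos.le]
    norm_num
  rw [h2, ← Complex.ofReal_exp, ← Complex.ofReal_mul]

lemma coord_cont (i : Fin 3) : Continuous (fun ξ : R3 => ξ i) :=
  (EuclideanSpace.proj (𝕜 := ℝ) i).continuous

lemma coord_le_norm (y : R3) (i : Fin 3) : |y i| ≤ ‖y‖ := by
  have h2 : (y i) ^ 2 ≤ ‖y‖ ^ 2 := by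
    have hs : (y i) ^ 2 ≤ ∑ j : Fin 3, (y j) ^ 2 :=
      Finset.single_le_sum (fun j _ => sq_nonneg (y j)) (Finset.mem_univ i)
    rw [normsq3, ← Fin.sum_univ_three (fun j => (y j) ^ 2)]
    exact hs
  calc |y i| = Real.sqrt ((y i) ^ 2) := (Real.sqrt_sq_eq_abs _).symm
    _ ≤ Real.sqrt (‖y‖ ^ 2) := Real.sqrt_le_sqrt h2
    _ = ‖y‖ := Real.sqrt_sq (norm_nonneg _)

lemma khat_meas : Measurable Khat := by
  apply Measurable.const_mul
  exact ((((continuous_const.mul ((coord_cont 2).pow 2)).sub ((coord_cont 0).pow 2)).sub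
    ((coord_cont 1).pow 2)).measurable).div (continuous_norm.pow 2).measurable

lemma khat_bound (ξ : R3) : |Khat ξ| ≤ 8 * π / 3 := by
  rw [Khat, abs_mul, abs_of_pos (by positivity : (0:ℝ) < 4 * π / 3)]
  have h : |(2 * (ξ 2) ^ 2 - (ξ 0) ^ 2 - (ξ 1) ^ 2) / ‖ξ‖ ^ 2| ≤ 2 := by
    rcases eq_or_ne (‖ξ‖ ^ 2) 0 with h0 | h0
    · rw [h0, div_zero, abs_zero]; norm_num
    · rw [abs_div, abs_of_nonneg (by positivity : (0:ℝ) ≤ ‖ξ‖ ^ 2),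
        div_le_iff₀ (lt_of_le_of_ne (by positivity) (Ne.symm h0))]
      rw [normsq3] at *
      rw [abs_le]
      constructor <;> nlinarith [sq_nonneg (ξ 0), sq_nonneg (ξ 1), sq_nonneg (ξ 2)]
  calc (4 * π / 3) * |(2 * (ξ 2) ^ 2 - (ξ 0) ^ 2 - (ξ 1) ^ 2) / ‖ξ‖ ^ 2|
      ≤ (4 * π / 3) * 2 := by
        exact mul_le_mul_of_nonneg_left h (by positivity)
    _ = 8 * π / 3 := by ring

lemma khat_dscl (d : Fin 3 → ℝ) (ξ : R3) :
    Khat (dscl d ξ) = (4 * π / 3) *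
      ((2 * (d 2 * ξ 2) ^ 2 - (d 0 * ξ 0) ^ 2 - (d 1 * ξ 1) ^ 2) /
        ((d 0 * ξ 0) ^ 2 + (d 1 * ξ 1) ^ 2 + (d 2 * ξ 2) ^ 2)) := by
  rw [Khat, normsq3, dscl_apply, dscl_apply, dscl_apply]

lemma integrable_gauss_half : Integrable (fun ξ : R3 => rexp (-‖ξ‖ ^ 2 / 2)) volume := by
  have h := integrable_gauss3 (b := 1/2) (by norm_num)
  have heq : (fun ξ : R3 => rexp (-‖ξ‖ ^ 2 / 2)) = fun ξ : R3 => rexp (-(1/2) * ‖ξ‖ ^ 2) := by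
    ext ξ; ring_nf
  rw [heq]; exact h

lemma line_null (i : Fin 3) : (volume : Measure R3) {ξ : R3 | ξ i = 0} = 0 := by
  have hker : {ξ : R3 | ξ i = 0}
      = ((LinearMap.ker (EuclideanSpace.projₗ (𝕜 := ℝ) i) : Submodule ℝ R3) : Set R3) := by
    ext ξ
    simp only [Set.mem_setOf_eq, SetLike.mem_coe, LinearMap.mem_ker]
    rfl
  rw [hker]
  refine Measure.addHaar_submodule _ _ ?_
  intro htop
  have h1 : (EuclideanSpace.single i (1:ℝ) : R3)
      ∈ LinearMap.ker (EuclideanSpace.projₗ (𝕜 := ℝ) i) := htop ▸ Submodule.mem_top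
  rw [LinearMap.mem_ker] at h1
  have : (EuclideanSpace.single i (1:ℝ) : R3) i = 1 := by
    simp [EuclideanSpace.single_apply]
  rw [show (EuclideanSpace.projₗ (𝕜 := ℝ) i) (EuclideanSpace.single i (1:ℝ)) =
    (EuclideanSpace.single i (1:ℝ) : R3) i from rfl, this] at h1
  exact one_ne_zero h1

lemma ae_coord_ne (i : Fin 3) : ∀ᵐ ξ : R3 ∂(volume : Measure R3), ξ i ≠ 0 := by
  rw [ae_iff]
  convert line_null i using 2
  simp [not_not]

lemma meas_F (l1 l2 : ℝ) (d : Fin 3 → ℝ) :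
    AEStronglyMeasurable
      (fun ξ : R3 => (l1 + l2 * Khat (dscl d ξ)) * rexp (-‖ξ‖ ^ 2 / 2))
      (volume : Measure R3) := by
  refine Measurable.aestronglyMeasurable ?_
  exact ((measurable_const.add (measurable_const.mul
    (khat_meas.comp (dscl d).continuous_of_finiteDimensional.measurable))).mul
    (by fun_prop : Continuous fun ξ : R3 => rexp (-‖ξ‖ ^ 2 / 2)).measurable)

lemma bound_F (l1 l2 : ℝ) (d : Fin 3 → ℝ) (ξ : R3) :
    ‖(l1 + l2 * Khat (dscl d ξ)) * rexp (-‖ξ‖ ^ 2 / 2)‖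
      ≤ (|l1| + |l2| * (8 * π / 3)) * rexp (-‖ξ‖ ^ 2 / 2) := by
  rw [Real.norm_eq_abs, abs_mul, abs_of_pos (exp_pos _)]
  refine mul_le_mul_of_nonneg_right ?_ (exp_pos _).le
  calc |l1 + l2 * Khat (dscl d ξ)| ≤ |l1| + |l2| * |Khat (dscl d ξ)| := by
        rw [← abs_mul]; exact abs_add_le _ _
    _ ≤ |l1| + |l2| * (8 * π / 3) := by
        gcongr
        exact khat_bound _

lemma limit_a3 (l1 l2 : ℝ) :
    Tendsto (fun n : ℕ => ∫ ξ : R3,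
        (l1 + l2 * Khat (dscl ![1, 1, 1/(n+1)] ξ)) * rexp (-‖ξ‖ ^ 2 / 2))
      atTop (𝓝 ((l1 - (4 * π / 3) * l2) * ∫ ξ : R3, rexp (-‖ξ‖ ^ 2 / 2))) := by
  rw [← MeasureTheory.integral_const_mul]
  refine tendsto_integral_of_dominated_convergence
    (fun ξ => (|l1| + |l2| * (8 * π / 3)) * rexp (-‖ξ‖ ^ 2 / 2))
    (fun n => meas_F l1 l2 _) (integrable_gauss_half.const_mul _)
    (fun n => ae_of_all _ fun ξ => bound_F l1 l2 _ ξ) ?_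
  filter_upwards [ae_coord_ne 0] with ξ hξ0
  set g : ℝ → ℝ := fun s =>
    (l1 + l2 * ((4 * π / 3) *
      ((2 * (s * ξ 2) ^ 2 - (1 * ξ 0) ^ 2 - (1 * ξ 1) ^ 2) /
        ((1 * ξ 0) ^ 2 + (1 * ξ 1) ^ 2 + (s * ξ 2) ^ 2)))) * rexp (-‖ξ‖ ^ 2 / 2) with hg
  have hFg : ∀ n : ℕ, (l1 + l2 * Khat (dscl ![1, 1, 1/(n+1)] ξ)) * rexp (-‖ξ‖ ^ 2 / 2)
      = g (1/(n+1)) := by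
    intro n
    rw [khat_dscl, hg]
    norm_num [Matrix.cons_val_zero, Matrix.cons_val_one, Matrix.head_cons, Matrix.cons_val_two, Matrix.tail_cons]
  have hpos : 0 < (1 * ξ 0) ^ 2 + (1 * ξ 1) ^ 2 + (0 * ξ 2) ^ 2 := by
    have h0 : 0 < ξ 0 ^ 2 := lt_of_le_of_ne (sq_nonneg _) (Ne.symm (pow_ne_zero 2 hξ0))
    nlinarith [sq_nonneg (ξ 1)]
  have hcont : ContinuousAt g 0 := by
    refine ContinuousAt.mul ?_ continuousAt_const
    refine ContinuousAt.add continuousAt_const (ContinuousAt.mul continuousAt_const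
      (ContinuousAt.mul continuousAt_const (ContinuousAt.div (by fun_prop) (by fun_prop) ?_)))
    exact hpos.ne'
  have hg0 : g 0 = (l1 - (4 * π / 3) * l2) * rexp (-‖ξ‖ ^ 2 / 2) := by
    simp only [hg]
    have : (2 * ((0:ℝ) * ξ 2) ^ 2 - (1 * ξ 0) ^ 2 - (1 * ξ 1) ^ 2) /
        ((1 * ξ 0) ^ 2 + (1 * ξ 1) ^ 2 + ((0:ℝ) * ξ 2) ^ 2) = -1 := by
      rw [div_eq_iff hpos.ne']
      ring
    rw [this]
    ring
  have := (hcont.tendsto).comp tendsto_one_div_add_atTop_nhds_zero_nat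
  rw [hg0] at this
  simp only [Function.comp_def] at this
  convert this using 2 with n
  exact hFg n

lemma limit_a4 (l1 l2 : ℝ) :
    Tendsto (fun n : ℕ => ∫ ξ : R3,
        (l1 + l2 * Khat (dscl ![1/(n+1), 1/(n+1), 1] ξ)) * rexp (-‖ξ‖ ^ 2 / 2))
      atTop (𝓝 ((l1 + (8 * π / 3) * l2) * ∫ ξ : R3, rexp (-‖ξ‖ ^ 2 / 2))) := by
  rw [← MeasureTheory.integral_const_mul]
  refine tendsto_integral_of_dominated_convergence
    (fun ξ => (|l1| + |l2| * (8 * π / 3)) * rexp (-‖ξ‖ ^ 2 / 2))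
    (fun n => meas_F l1 l2 _) (integrable_gauss_half.const_mul _)
    (fun n => ae_of_all _ fun ξ => bound_F l1 l2 _ ξ) ?_
  filter_upwards [ae_coord_ne 2] with ξ hξ2
  set g : ℝ → ℝ := fun s =>
    (l1 + l2 * ((4 * π / 3) *
      ((2 * (1 * ξ 2) ^ 2 - (s * ξ 0) ^ 2 - (s * ξ 1) ^ 2) /
        ((s * ξ 0) ^ 2 + (s * ξ 1) ^ 2 + (1 * ξ 2) ^ 2)))) * rexp (-‖ξ‖ ^ 2 / 2) with hg
  have hFg : ∀ n : ℕ, (l1 + l2 * Khat (dscl ![1/(n+1), 1/(n+1), 1] ξ)) * rexp (-‖ξ‖ ^ 2 / 2)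
      = g (1/(n+1)) := by
    intro n
    rw [khat_dscl, hg]
    norm_num [Matrix.cons_val_zero, Matrix.cons_val_one, Matrix.head_cons, Matrix.cons_val_two, Matrix.tail_cons]
  have hpos : 0 < ((0:ℝ) * ξ 0) ^ 2 + ((0:ℝ) * ξ 1) ^ 2 + (1 * ξ 2) ^ 2 := by
    have h0 : 0 < ξ 2 ^ 2 := lt_of_le_of_ne (sq_nonneg _) (Ne.symm (pow_ne_zero 2 hξ2))
    nlinarith
  have hcont : ContinuousAt g 0 := by
    refine ContinuousAt.mul ?_ continuousAt_const
    refine ContinuousAt.add continuousAt_const (ContinuousAt.mul continuousAt_const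
      (ContinuousAt.mul continuousAt_const (ContinuousAt.div (by fun_prop) (by fun_prop) ?_)))
    exact hpos.ne'
  have hg0 : g 0 = (l1 + (8 * π / 3) * l2) * rexp (-‖ξ‖ ^ 2 / 2) := by
    simp only [hg]
    have : (2 * ((1:ℝ) * ξ 2) ^ 2 - ((0:ℝ) * ξ 0) ^ 2 - ((0:ℝ) * ξ 1) ^ 2) /
        (((0:ℝ) * ξ 0) ^ 2 + ((0:ℝ) * ξ 1) ^ 2 + ((1:ℝ) * ξ 2) ^ 2) = 2 := by
      rw [div_eq_iff hpos.ne']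
      ring
    rw [this]
    ring
  have := (hcont.tendsto).comp tendsto_one_div_add_atTop_nhds_zero_nat
  rw [hg0] at this
  simp only [Function.comp_def] at this
  convert this using 2 with n
  exact hFg n

lemma gauss_memL2 {b : ℝ} (hb : 0 < b) (K : ℝ) :
    MemLp (fun x : R3 => K * rexp (-b * ‖x‖ ^ 2)) 2 (volume : Measure R3) := by
  have hcont : Continuous fun x : R3 => K * rexp (-b * ‖x‖ ^ 2) := by fun_prop
  rw [memLp_two_iff_integrable_sq hcont.aestronglyMeasurable]
  have heq : (fun x : R3 => (K * rexp (-b * ‖x‖ ^ 2)) ^ 2)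
      = fun x : R3 => K ^ 2 * rexp (-(2 * b) * ‖x‖ ^ 2) := by
    ext x
    rw [mul_pow, pow_two (rexp _), ← Real.exp_add]
    ring_nf
  rw [heq]
  exact (integrable_gauss3 (by linarith)).const_mul _

lemma norm_proj_le (i : Fin 3) : ‖(EuclideanSpace.proj (𝕜 := ℝ) i : R3 →L[ℝ] ℝ)‖ ≤ 1 := by
  refine ContinuousLinearMap.opNorm_le_bound _ zero_le_one fun y => ?_
  rw [one_mul]
  simpa [Real.norm_eq_abs] using coord_le_norm y i

set_option maxHeartbeats 2000000 in
lemma key (l1 l2 c : ℝ) (hc : 0 < c) (d : Fin 3 → ℝ) (hd : ∀ i, 0 < d i)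
    (hI : (∫ ξ : R3, (l1 + l2 * Khat (dscl d ξ)) * rexp (-‖ξ‖ ^ 2 / 2)) < 0) :
    ∃ u : R3 → ℂ, InS c u ∧ funB l1 l2 u < 0 := by
  set N : ℝ := π ^ ((3 : ℝ) / 2) with hNdef
  have hN : (∫ x : R3, rexp (-‖x‖ ^ 2)) = N := by
    have h := GaussianFourier.integral_rexp_neg_mul_sq_norm (V := R3) (one_pos)
    rw [finrank_euclideanSpace_fin] at h
    simpa [hNdef] using h
  have hNpos : 0 < N := by rw [hNdef]; positivity
  set det : ℝ := d 0 * d 1 * d 2 with hdetdef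
  have hdet : 0 < det := by have := hd 0; have := hd 1; have := hd 2; positivity
  set a : ℝ := Real.sqrt (det * c / N) with hadef
  have ha : 0 < a := Real.sqrt_pos.mpr (by positivity)
  set q : R3 → ℝ := fun x => ‖dscl d x‖ ^ 2 with hqdef
  set u : R3 → ℂ := fun x => ((a * rexp ((-1/2 : ℝ) * q x) : ℝ) : ℂ) with hudef
  have husq : ∀ x, ‖u x‖ ^ 2 = (det * c / N) * rexp (-q x) := by
    intro x
    show ‖((a * rexp ((-1/2 : ℝ) * q x) : ℝ) : ℂ)‖ ^ 2 = _
    rw [Complex.norm_real, Real.norm_eq_abs,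
      abs_of_pos (by positivity : (0:ℝ) < a * rexp ((-1/2 : ℝ) * q x)), mul_pow,
      hadef, Real.sq_sqrt (by positivity), pow_two (rexp _), ← Real.exp_add]
    ring_nf
  -- quadratic lower bound
  set m : ℝ := min ((d 0) ^ 2) (min ((d 1) ^ 2) ((d 2) ^ 2)) with hmdef
  have hm : 0 < m := by
    have := hd 0; have := hd 1; have := hd 2
    simp only [hmdef, lt_min_iff]
    exact ⟨by positivity, by positivity, by positivity⟩
  have hm0 : m ≤ (d 0) ^ 2 := min_le_left _ _
  have hm1 : m ≤ (d 1) ^ 2 := (min_le_right _ _).trans (min_le_left _ _)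
  have hm2 : m ≤ (d 2) ^ 2 := (min_le_right _ _).trans (min_le_right _ _)
  have hqm : ∀ x : R3, m * ‖x‖ ^ 2 ≤ q x := by
    intro x
    show m * ‖x‖ ^ 2 ≤ ‖dscl d x‖ ^ 2
    rw [normsq3 (dscl d x), dscl_apply, dscl_apply, dscl_apply, normsq3 x]
    nlinarith [mul_le_mul_of_nonneg_right hm0 (sq_nonneg (x 0)),
      mul_le_mul_of_nonneg_right hm1 (sq_nonneg (x 1)),
      mul_le_mul_of_nonneg_right hm2 (sq_nonneg (x 2)), sq_nonneg (x 0), sq_nonneg (x 1),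
      sq_nonneg (x 2)]
  have hqcont : Continuous q :=
    (continuous_norm.comp (dscl d).continuous_of_finiteDimensional).pow 2
  have hucont : Continuous u :=
    Complex.continuous_ofReal.comp
      (by fun_prop : Continuous fun x => a * rexp ((-1/2 : ℝ) * q x))
  -- derivative structure
  set P : Fin 3 → (R3 →L[ℝ] ℝ) := fun i => EuclideanSpace.proj (𝕜 := ℝ) i with hPdef
  set Lq : R3 → (R3 →L[ℝ] ℝ) := fun x =>
    (2 * d 0 ^ 2 * x 0) • P 0 + (2 * d 1 ^ 2 * x 1) • P 1 + (2 * d 2 ^ 2 * x 2) • P 2 with hLqdef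
  have hqeq : q = fun x : R3 => (d 0 * x 0) * (d 0 * x 0) + (d 1 * x 1) * (d 1 * x 1)
      + (d 2 * x 2) * (d 2 * x 2) := by
    funext x
    show ‖dscl d x‖ ^ 2 = _
    rw [normsq3 (dscl d x), dscl_apply, dscl_apply, dscl_apply]
    ring
  have hcoordFD : ∀ (x : R3) (i : Fin 3), HasFDerivAt (fun y : R3 => y i) (P i) x :=
    fun x i => (EuclideanSpace.proj (𝕜 := ℝ) i : R3 →L[ℝ] ℝ).hasFDerivAt
  have hterm : ∀ (x : R3) (i : Fin 3),
      HasFDerivAt (fun y : R3 => (d i * y i) * (d i * y i)) ((2 * d i ^ 2 * x i) • P i) x := by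
    intro x i
    have h1 : HasFDerivAt (fun y : R3 => d i * y i) (d i • P i) x :=
      ((hcoordFD x i).const_mul (d i)).congr_fderiv (by ext y; simp)
    have h2 := h1.mul h1
    refine h2.congr_fderiv ?_
    ext y
    simp
    ring
  have hqFD : ∀ x : R3, HasFDerivAt q (Lq x) x := by
    intro x
    rw [hqeq, hLqdef]
    exact ((hterm x 0).add (hterm x 1)).add (hterm x 2)
  have hLq_norm : ∀ x : R3, ‖Lq x‖ ≤ (2 * (d 0 ^ 2 + d 1 ^ 2 + d 2 ^ 2)) * ‖x‖ := by
    intro x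
    rw [hLqdef]
    have hb : ∀ i : Fin 3, ‖(2 * d i ^ 2 * x i) • P i‖ ≤ 2 * d i ^ 2 * ‖x‖ := by
      intro i
      calc ‖(2 * d i ^ 2 * x i) • P i‖ ≤ ‖(2 * d i ^ 2 * x i : ℝ)‖ * ‖P i‖ := norm_smul_le _ _
        _ = |2 * d i ^ 2 * x i| * ‖P i‖ := by rw [Real.norm_eq_abs]
        _ ≤ |2 * d i ^ 2 * x i| * 1 :=
            mul_le_mul_of_nonneg_left (norm_proj_le i) (abs_nonneg _)
        _ = |2 * d i ^ 2| * |x i| := by rw [mul_one, abs_mul]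
        _ ≤ |2 * d i ^ 2| * ‖x‖ := mul_le_mul_of_nonneg_left (coord_le_norm x i) (abs_nonneg _)
        _ = 2 * d i ^ 2 * ‖x‖ := by rw [abs_of_nonneg (by positivity : (0:ℝ) ≤ 2 * d i ^ 2)]
    calc ‖(2 * d 0 ^ 2 * x 0) • P 0 + (2 * d 1 ^ 2 * x 1) • P 1 + (2 * d 2 ^ 2 * x 2) • P 2‖
        ≤ ‖(2 * d 0 ^ 2 * x 0) • P 0 + (2 * d 1 ^ 2 * x 1) • P 1‖ + ‖(2 * d 2 ^ 2 * x 2) • P 2‖ :=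
          norm_add_le _ _
      _ ≤ (‖(2 * d 0 ^ 2 * x 0) • P 0‖ + ‖(2 * d 1 ^ 2 * x 1) • P 1‖)
            + ‖(2 * d 2 ^ 2 * x 2) • P 2‖ := by gcongr; exact norm_add_le _ _
      _ ≤ (2 * d 0 ^ 2 * ‖x‖ + 2 * d 1 ^ 2 * ‖x‖) + 2 * d 2 ^ 2 * ‖x‖ := by
          gcongr <;> [exact hb 0; exact hb 1; exact hb 2]
      _ = (2 * (d 0 ^ 2 + d 1 ^ 2 + d 2 ^ 2)) * ‖x‖ := by ring
  set Lw : R3 → (R3 →L[ℝ] ℝ) := fun x =>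
    a • (rexp ((-1/2 : ℝ) * q x) • ((-1/2 : ℝ) • Lq x)) with hLwdef
  have hwFD : ∀ x : R3, HasFDerivAt (fun x => a * rexp ((-1/2 : ℝ) * q x)) (Lw x) x := by
    intro x
    have h1 : HasFDerivAt (fun y : R3 => (-1/2 : ℝ) * q y) ((-1/2 : ℝ) • Lq x) x :=
      (hqFD x).const_mul (-1/2)
    exact h1.exp.const_mul a
  have huFD : ∀ x : R3, HasFDerivAt u (Complex.ofRealCLM.comp (Lw x)) x := by
    intro x
    exact (Complex.ofRealCLM.hasFDerivAt (x := a * rexp ((-1/2 : ℝ) * q x))).comp x (hwFD x)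
  have hudiff : Differentiable ℝ u := fun x => (huFD x).differentiableAt
  have hufderiv : (fun x => fderiv ℝ u x) = fun x => Complex.ofRealCLM.comp (Lw x) :=
    funext fun x => (huFD x).fderiv
  -- Memℒp u 2
  have hu2 : MemLp u 2 (volume : Measure R3) := by
    refine MemLp.of_le (gauss_memL2 (b := m/2) (by positivity) a) hucont.aestronglyMeasurable
      (ae_of_all _ fun x => ?_)
    have h1 : ‖u x‖ = a * rexp ((-1/2 : ℝ) * q x) := by
      show ‖((a * rexp ((-1/2 : ℝ) * q x) : ℝ) : ℂ)‖ = _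
      rw [Complex.norm_real, Real.norm_eq_abs, abs_of_pos (by positivity)]
    rw [h1, Real.norm_eq_abs,
      abs_of_pos (by positivity : (0:ℝ) < a * rexp (-(m/2) * ‖x‖ ^ 2))]
    refine mul_le_mul_of_nonneg_left ?_ ha.le
    exact Real.exp_le_exp.mpr (by nlinarith [hqm x])
  -- pointwise fderiv bound
  set Cq : ℝ := 2 * (d 0 ^ 2 + d 1 ^ 2 + d 2 ^ 2) with hCqdef
  have hCq : 0 < Cq := by have := hd 0; have := hd 1; have := hd 2; positivity
  set K' : ℝ := a * (1/2) * Cq * (1 + 4/m) with hK'def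
  have hK' : 0 < K' := by positivity
  have hofn : ‖(Complex.ofRealCLM : ℝ →L[ℝ] ℂ)‖ ≤ 1 := by
    refine ContinuousLinearMap.opNorm_le_bound _ zero_le_one fun y => ?_
    rw [one_mul]
    exact le_of_eq (Complex.norm_real y)
  have hr : ∀ r : ℝ, 0 ≤ r →
      r * rexp (-(m/2) * r ^ 2) ≤ (1 + 4/m) * rexp (-(m/4) * r ^ 2) := by
    intro r hrpos
    have he := Real.add_one_le_exp ((m/4) * r ^ 2)
    have h4 : (4/m) * ((m/4) * r ^ 2) = r ^ 2 := by field_simp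
    have hpos1 : (0:ℝ) < 1 + 4/m := by positivity
    have hh := mul_le_mul_of_nonneg_left he hpos1.le
    have ht : (0:ℝ) ≤ (m/4) * r ^ 2 := by positivity
    have h2 : r ≤ (1 + 4/m) * rexp ((m/4) * r ^ 2) := by nlinarith [sq_nonneg (r - 1)]
    calc r * rexp (-(m/2) * r ^ 2)
        ≤ ((1 + 4/m) * rexp ((m/4) * r ^ 2)) * rexp (-(m/2) * r ^ 2) :=
          mul_le_mul_of_nonneg_right h2 (exp_pos _).le
      _ = (1 + 4/m) * rexp ((m/4) * r ^ 2 + -(m/2) * r ^ 2) := by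
          rw [mul_assoc, ← Real.exp_add]
      _ = (1 + 4/m) * rexp (-(m/4) * r ^ 2) := by
          rw [show (m/4) * r ^ 2 + -(m/2) * r ^ 2 = -(m/4) * r ^ 2 by ring]
  have hfb : ∀ x : R3, ‖fderiv ℝ u x‖ ≤ K' * rexp (-(m/4) * ‖x‖ ^ 2) := by
    intro x
    have h0 : fderiv ℝ u x = Complex.ofRealCLM.comp (Lw x) := (huFD x).fderiv
    rw [h0]
    have hLw : ‖Lw x‖ = a * (rexp ((-1/2 : ℝ) * q x) * ((1/2) * ‖Lq x‖)) := by
      rw [show Lw x = a • (rexp ((-1/2 : ℝ) * q x) • (((-1/2 : ℝ)) • Lq x)) from rfl,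
        norm_smul a (rexp ((-1/2 : ℝ) * q x) • (((-1/2 : ℝ)) • Lq x)),
        norm_smul (rexp ((-1/2 : ℝ) * q x)) (((-1/2 : ℝ)) • Lq x),
        norm_smul ((-1/2 : ℝ)) (Lq x), Real.norm_eq_abs, Real.norm_eq_abs, Real.norm_eq_abs,
        abs_of_pos ha, abs_of_pos (exp_pos _), show |(-1/2 : ℝ)| = 1/2 by norm_num]
    calc ‖Complex.ofRealCLM.comp (Lw x)‖
        ≤ ‖(Complex.ofRealCLM : ℝ →L[ℝ] ℂ)‖ * ‖Lw x‖ := ContinuousLinearMap.opNorm_comp_le _ _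
      _ ≤ 1 * ‖Lw x‖ := mul_le_mul_of_nonneg_right hofn (norm_nonneg _)
      _ = a * (rexp ((-1/2 : ℝ) * q x) * ((1/2) * ‖Lq x‖)) := by rw [one_mul, hLw]
      _ ≤ a * (rexp (-(m/2) * ‖x‖ ^ 2) * ((1/2) * (Cq * ‖x‖))) := by
          refine mul_le_mul_of_nonneg_left ?_ ha.le
          refine mul_le_mul (Real.exp_le_exp.mpr (by nlinarith [hqm x]))
            (mul_le_mul_of_nonneg_left (hLq_norm x) (by norm_num))
            (by positivity) (exp_pos _).le
      _ = (a * (1/2) * Cq) * (‖x‖ * rexp (-(m/2) * ‖x‖ ^ 2)) := by ring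
      _ ≤ (a * (1/2) * Cq) * ((1 + 4/m) * rexp (-(m/4) * ‖x‖ ^ 2)) := by
          refine mul_le_mul_of_nonneg_left (hr ‖x‖ (norm_nonneg x)) (by positivity)
      _ = K' * rexp (-(m/4) * ‖x‖ ^ 2) := by rw [hK'def]; ring
  have hLqc : Continuous Lq := by
    rw [hLqdef]
    exact (((continuous_const.mul (coord_cont 0)).smul continuous_const).add
      ((continuous_const.mul (coord_cont 1)).smul continuous_const)).add
      ((continuous_const.mul (coord_cont 2)).smul continuous_const)
  have hLwc : Continuous Lw := by
    rw [hLwdef]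
    exact Continuous.const_smul
      ((by fun_prop : Continuous fun x => rexp ((-1/2 : ℝ) * q x)).smul
        (hLqc.const_smul ((-1/2 : ℝ)))) a
  have hfdm : MemLp (fun x => fderiv ℝ u x) 2 (volume : Measure R3) := by
    refine MemLp.of_le (gauss_memL2 (b := m/4) (by positivity) K') ?_
      (ae_of_all _ fun x => ?_)
    · rw [hufderiv]
      exact (Continuous.clm_comp continuous_const hLwc).aestronglyMeasurable
    · rw [Real.norm_eq_abs (K' * _), abs_of_pos (by positivity)]
      exact hfb x
  -- mass
  have hmass : (∫ x : R3, ‖u x‖ ^ 2) = c := by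
    have h1 : (fun x : R3 => ‖u x‖ ^ 2)
        = fun x : R3 => (fun y : R3 => (det * c / N) * rexp (-‖y‖ ^ 2)) (dscl d x) := by
      funext x
      simp only
      rw [husq x]
      all_goals simp only [hqdef]
    rw [h1, integral_dscl d hdet.ne' _
      ((by fun_prop : Continuous fun y : R3 => (det * c / N) * rexp (-‖y‖ ^ 2)).aestronglyMeasurable),
      MeasureTheory.integral_const_mul, hN, smul_eq_mul, abs_of_pos hdet]
    field_simp
  -- Fourier transform of |u|^2
  set dinv : Fin 3 → ℝ := fun i => (d i)⁻¹ with hdinvdef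
  have hcancel : ∀ i, d i * dinv i = 1 := fun i => mul_inv_cancel₀ (hd i).ne'
  have hdinvdet : dinv 0 * dinv 1 * dinv 2 = det⁻¹ := by
    rw [hdinvdef, hdetdef]
    simp only
    rw [mul_inv, mul_inv]
  have hftu : ∀ ξ : R3, ft (fun x => Complex.ofReal (‖u x‖ ^ 2)) ξ
      = (((c / N) * (π ^ ((3:ℝ)/2) * rexp (-‖dscl dinv ξ‖ ^ 2 / 4)) : ℝ) : ℂ) := by
    intro ξ
    rw [ft]
    have hinner : ∀ x : R3, ⟪dscl d x, dscl dinv ξ⟫ = ⟪x, ξ⟫ := by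
      intro x
      rw [inner_dscl]
      congr 1
      exact dscl_dscl d dinv ξ hcancel
    have hint : (fun x : R3 => Complex.exp (-Complex.I * Complex.ofReal ⟪x, ξ⟫)
        * Complex.ofReal (‖u x‖ ^ 2))
        = fun x : R3 => (fun y : R3 => ((det * c / N : ℝ) : ℂ)
            * (Complex.exp (-Complex.I * Complex.ofReal ⟪y, dscl dinv ξ⟫)
              * ((rexp (-‖y‖ ^ 2) : ℝ) : ℂ))) (dscl d x) := by
      funext x
      simp only
      rw [husq x, hinner x]
      simp only [hqdef]
      push_cast
      ring
    rw [hint]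
    have hHc : Continuous fun y : R3 => ((det * c / N : ℝ) : ℂ)
        * (Complex.exp (-Complex.I * Complex.ofReal ⟪y, dscl dinv ξ⟫)
          * ((rexp (-‖y‖ ^ 2) : ℝ) : ℂ)) := by
      refine continuous_const.mul (Continuous.mul ?_ ?_)
      · exact Complex.continuous_exp.comp (continuous_const.mul
          (Complex.continuous_ofReal.comp (Continuous.inner continuous_id continuous_const)))
      · exact Complex.continuous_ofReal.comp ((continuous_norm.pow 2).neg.rexp)
    rw [integral_dscl d hdet.ne' _ hHc.aestronglyMeasurable,
      MeasureTheory.integral_const_mul]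
    have hftg : (∫ y : R3, Complex.exp (-Complex.I * Complex.ofReal ⟪y, dscl dinv ξ⟫)
        * ((rexp (-‖y‖ ^ 2) : ℝ) : ℂ))
        = ((π ^ ((3 : ℝ) / 2) * rexp (-‖dscl dinv ξ‖ ^ 2 / 4) : ℝ) : ℂ) :=
      ft_gaussian (dscl dinv ξ)
    rw [hftg, ← Complex.ofReal_mul, Complex.real_smul, ← Complex.ofReal_mul]
    congr 1
    rw [abs_of_pos hdet]
    field_simp
  -- funB computation
  set D : ℝ := ((c / N) * π ^ ((3:ℝ)/2)) ^ 2 with hDdef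
  have hD : 0 < D := by positivity
  have hIint : (∫ ξ : R3, (l1 + l2 * Khat ξ) * ‖ft (fun x => Complex.ofReal (‖u x‖ ^ 2)) ξ‖ ^ 2)
      = det * (D * ∫ ξ : R3, (l1 + l2 * Khat (dscl d ξ)) * rexp (-‖ξ‖ ^ 2 / 2)) := by
    have h1 : ∀ ξ : R3, ‖ft (fun x => Complex.ofReal (‖u x‖ ^ 2)) ξ‖ ^ 2
        = D * rexp (-‖dscl dinv ξ‖ ^ 2 / 2) := by
      intro ξ
      rw [hftu ξ, Complex.norm_real, Real.norm_eq_abs, abs_of_pos (by positivity), hDdef,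
        mul_pow, mul_pow, pow_two (rexp _), ← Real.exp_add]
      rw [show -‖dscl dinv ξ‖ ^ 2 / 4 + -‖dscl dinv ξ‖ ^ 2 / 4 = -‖dscl dinv ξ‖ ^ 2 / 2 by ring]
      ring
    have h2 : (fun ξ : R3 => (l1 + l2 * Khat ξ) * ‖ft (fun x => Complex.ofReal (‖u x‖ ^ 2)) ξ‖ ^ 2)
        = fun ξ : R3 => (fun ζ : R3 => D * ((l1 + l2 * Khat (dscl d ζ)) * rexp (-‖ζ‖ ^ 2 / 2)))
            (dscl dinv ξ) := by
      funext ξ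
      simp only
      rw [h1 ξ, dscl_dscl d dinv ξ hcancel]
      ring
    have hmeasH : AEStronglyMeasurable
        (fun ζ : R3 => D * ((l1 + l2 * Khat (dscl d ζ)) * rexp (-‖ζ‖ ^ 2 / 2)))
        (volume : Measure R3) := by
      refine Measurable.aestronglyMeasurable ?_
      exact measurable_const.mul (((measurable_const.add (measurable_const.mul
        (khat_meas.comp (dscl d).continuous_of_finiteDimensional.measurable))).mul
        ((by fun_prop : Continuous fun ζ : R3 => rexp (-‖ζ‖ ^ 2 / 2)).measurable)))
    have hdinv_ne : dinv 0 * dinv 1 * dinv 2 ≠ 0 := by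
      rw [hdinvdet]
      exact inv_ne_zero hdet.ne'
    rw [h2, integral_dscl dinv hdinv_ne _ hmeasH, MeasureTheory.integral_const_mul,
      hdinvdet, abs_inv, abs_of_pos hdet, inv_inv, smul_eq_mul]
  have hBval : funB l1 l2 u < 0 := by
    rw [funB, hIint]
    have hpos1 : (0:ℝ) < ((2 * π) ^ 3)⁻¹ := by positivity
    exact mul_neg_of_pos_of_neg hpos1
      (mul_neg_of_pos_of_neg hdet (mul_neg_of_pos_of_neg hD hI))
  exact ⟨u, ⟨⟨hu2, hudiff, hfdm⟩, hmass⟩, hBval⟩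

end AuxStmt13

/-- In the regimes (a3), (a4), every sphere `S(c)` contains a function with
`B(u) < 0`. -/
theorem stmt13 (l1 l2 : ℝ) (hnd : l1 ≠ 0 ∨ l2 ≠ 0)
    (h : condA3 l1 l2 ∨ condA4 l1 l2) :
    ∀ c : ℝ, 0 < c → ∃ u : R3 → ℂ, InS c u ∧ funB l1 l2 u < 0 := by
  intro c hc
  have hM : (0:ℝ) < ∫ ξ : R3, rexp (-‖ξ‖ ^ 2 / 2) := by
    have hval := GaussianFourier.integral_rexp_neg_mul_sq_norm (V := R3)
      (by norm_num : (0:ℝ) < 1/2)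
    rw [finrank_euclideanSpace_fin] at hval
    have heq : (fun ξ : R3 => rexp (-‖ξ‖ ^ 2 / 2)) = fun ξ : R3 => rexp (-(1/2) * ‖ξ‖ ^ 2) := by
      ext ξ; ring_nf
    rw [heq, hval]
    positivity
  rcases h with ⟨h2, h3⟩ | ⟨h2, h3⟩
  · have hτ : (l1 - (4 * π / 3) * l2) * (∫ ξ : R3, rexp (-‖ξ‖ ^ 2 / 2)) < 0 :=
      mul_neg_of_neg_of_pos h3 hM
    obtain ⟨n, hn⟩ := ((limit_a3 l1 l2).eventually_lt_const hτ).exists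
    refine key l1 l2 c hc ![1, 1, 1/(n+1)] ?_ hn
    intro i
    fin_cases i <;>
      norm_num [Matrix.cons_val_zero, Matrix.cons_val_one, Matrix.head_cons] <;>
      positivity
  · have hτ : (l1 + (8 * π / 3) * l2) * (∫ ξ : R3, rexp (-‖ξ‖ ^ 2 / 2)) < 0 :=
      mul_neg_of_neg_of_pos h3 hM
    obtain ⟨n, hn⟩ := ((limit_a4 l1 l2).eventually_lt_const hτ).exists
    refine key l1 l2 c hc ![1/(n+1), 1/(n+1), 1] ?_ hn
    intro i
    fin_cases i <;>
      norm_num [Matrix.cons_val_zero, Matrix.cons_val_one, Matrix.head_cons] <;>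
      positivity
end
end
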